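/- arXiv:1603.02808 — 13 statements merged into one kernel-verified Lean document; each statement's English description precedes it below -/
import Mathlib

section
/- Let α > 0, λ < 0, and let a, c, d be real numbers with c < 0 < a, d ≥ 0, satisfying 1/α + λ² + a·c − c² = 0. With ρ₁ = (√(4c(2c−a)+d²)+d)/2 and ρ₂ = (√(4c(2c−a)+d²)−d)/2, one has λ²/(λ² + 1/α) + 1/(α(c−a)(2c−a)) + 1/(α·ρ₁(ρ₁+ρ₂)) + 1/(α·ρ₂(ρ₁+ρ₂)) = 1. -/
/-! Vieta: `ρ₁ ρ₂ = c (2c - a)` and `ρ₁ + ρ₂ = √(4c(2c - a) + d²)`, so the last two terms combine to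
`1 / (α c (2c - a))`. The same partial-fraction identity, applied to `(c - a) + c = 2c - a`, merges
this with the second term into `1 / (α (c - a) c)`, and `(c - a) c = λ² + 1/α` is the constraint. -/

theorem add_div_two_mul_sub_div_two_of_sq_eq {K : Type*} [Field K] [CharZero K] {s p d : K}
    (hs : s ^ 2 = 4 * p + d ^ 2) : (s + d) / 2 * ((s - d) / 2) = p := by
  linear_combination hs / 4

theorem one_div_mul_mul_add_one_div_mul_mul_of_add_eq {K : Type*} [Field K] (α : K) {x y z : K}
    (hx : x ≠ 0) (hy : y ≠ 0) (hxy : x + y = z) (hz : z ≠ 0) :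
    1 / (α * x * z) + 1 / (α * y * z) = 1 / (α * x * y) := by
  subst hxy
  rcases eq_or_ne α 0 with rfl | hα
  · simp
  · field_simp
    ring

theorem stmt_1_general (α lam a c d : ℝ)
    (hc : c < 0) (ha : 0 < a)
    (hrel : 1/α + lam^2 + a*c - c^2 = 0)
    (ρ₁ ρ₂ : ℝ)
    (hρ₁ : ρ₁ = (Real.sqrt (4*c*(2*c - a) + d^2) + d)/2)
    (hρ₂ : ρ₂ = (Real.sqrt (4*c*(2*c - a) + d^2) - d)/2) :
    lam^2/(lam^2 + 1/α) + 1/(α*(c - a)*(2*c - a))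
      + 1/(α*ρ₁*(ρ₁ + ρ₂)) + 1/(α*ρ₂*(ρ₁ + ρ₂)) = 1 := by
  have hp : 0 < c * (2*c - a) := mul_pos_of_neg_of_neg hc (by linarith)
  have hdisc : 0 < 4*c*(2*c - a) + d^2 := by nlinarith [sq_nonneg d]
  have hprod : ρ₁ * ρ₂ = c * (2*c - a) := by
    rw [hρ₁, hρ₂]
    exact add_div_two_mul_sub_div_two_of_sq_eq (by rw [Real.sq_sqrt hdisc.le]; ring)
  have hsum : ρ₁ + ρ₂ ≠ 0 := by
    rw [hρ₁, hρ₂, ← add_div, add_add_sub_cancel, ← two_mul, mul_div_cancel_left₀ _ two_ne_zero]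
    exact (Real.sqrt_pos.mpr hdisc).ne'
  obtain ⟨hρ₁0, hρ₂0⟩ := mul_ne_zero_iff.mp (hprod ▸ hp.ne')
  have hρ : 1/(α*ρ₁*(ρ₁ + ρ₂)) + 1/(α*ρ₂*(ρ₁ + ρ₂)) = 1/(α*c*(2*c - a)) := by
    rw [one_div_mul_mul_add_one_div_mul_mul_of_add_eq α hρ₁0 hρ₂0 rfl hsum, mul_assoc, hprod,
      ← mul_assoc]
  have hca : 1/(α*(c - a)*(2*c - a)) + 1/(α*c*(2*c - a)) = 1/(α*(c - a)*c) :=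
    one_div_mul_mul_add_one_div_mul_mul_of_add_eq α (by linarith) hc.ne (by ring) (by linarith)
  have hlam : lam^2 + 1/α = (c - a) * c := by linear_combination hrel
  calc lam^2/(lam^2 + 1/α) + 1/(α*(c - a)*(2*c - a))
        + 1/(α*ρ₁*(ρ₁ + ρ₂)) + 1/(α*ρ₂*(ρ₁ + ρ₂))
      = lam^2/((c - a) * c) + 1/(α*(c - a)*c) := by
        rw [add_assoc, hρ, add_assoc, hca, hlam]
    _ = (lam^2 + 1/α) / ((c - a) * c) := by rw [add_div, div_div, ← mul_assoc]
    _ = 1 := by rw [hlam, div_self (mul_pos_of_neg_of_neg (by linarith) hc).ne']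

/-- the squared moduli of the four components sum to 1. -/
theorem stmt_1 (α lam a c d : ℝ) (hα : 0 < α) (hlam : lam < 0)
    (hc : c < 0) (ha : 0 < a) (hd : 0 ≤ d)
    (hrel : 1/α + lam^2 + a*c - c^2 = 0)
    (ρ₁ ρ₂ : ℝ)
    (hρ₁ : ρ₁ = (Real.sqrt (4*c*(2*c - a) + d^2) + d)/2)
    (hρ₂ : ρ₂ = (Real.sqrt (4*c*(2*c - a) + d^2) - d)/2) :
    lam^2/(lam^2 + 1/α) + 1/(α*(c - a)*(2*c - a))
      + 1/(α*ρ₁*(ρ₁ + ρ₂)) + 1/(α*ρ₂*(ρ₁ + ρ₂)) = 1 :=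
  stmt_1_general α lam a c d hc ha hrel ρ₁ ρ₂ hρ₁ hρ₂
end

section
/- Let α > 0, λ < 0, and let a, c, d be real numbers with c < 0 < a, d ≥ 0, satisfying 1/α + λ² + a·c − c² = 0. Set ρ₁ = (√(4c(2c−a)+d²)+d)/2 and ρ₂ = (√(4c(2c−a)+d²)−d)/2, and define f : ℝ³ → ℂ⁴ by f(u,v,w) = ( (λ/√(λ²+1/α))·exp(i·u/(αλ)), (1/√(α(c−a)(2c−a)))·exp(−i(λu−(c−a)v)), (1/√(α·ρ₁(ρ₁+ρ₂)))·exp(−i(λu+cv+ρ₁w)), (1/√(α·ρ₂(ρ₁+ρ₂)))·exp(−i(λu+cv−ρ₂w)) ). Then ‖f(u,v,w)‖ = 1 for every (u,v,w) ∈ ℝ³, i.e. f maps ℝ³ into the unit sphere S⁷ ⊂ ℂ⁴. -/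
/-!
Every coordinate of `f` is a real constant times a unimodular exponential, so `‖f‖²` is the
sum of the squares of the four constants. Since `ρ₁ ρ₂ = c(2c - a)`, the identity
`1/(p(p+q)) + 1/(q(p+q)) = 1/(pq)`, used once for `(ρ₁, ρ₂)` and once for `(c - a, c)`,
collapses the last three squares to `1/(α c(c - a))`, and `λ² + 1/α = c(c - a)` makes the
total `1`. Everything under a square root is positive because `c(c - a) = λ² + 1/α > 0`.
-/

open Complex in
theorem Complex.norm_exp_neg_I_mul_ofReal (x : ℝ) : ‖exp (-I * x)‖ = 1 := by
  simpa [neg_mul, ← mul_neg] using norm_exp_I_mul_ofReal (-x)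

theorem one_div_mul_add_add_one_div_mul_add {K : Type*} [Field K] {p q : K} (hp : p ≠ 0)
    (hq : q ≠ 0) (hpq : p + q ≠ 0) : 1 / (p * (p + q)) + 1 / (q * (p + q)) = 1 / (p * q) := by
  field_simp
  ring

theorem abs_lt_sqrt_four_mul_add_sq {q : ℝ} (hq : 0 < q) (d : ℝ) :
    |d| < √(4 * q + d ^ 2) := by
  rw [← Real.sqrt_sq_eq_abs]
  exact Real.sqrt_lt_sqrt (sq_nonneg d) (by linarith)

theorem sqrt_four_mul_add_sq_add_div_two_mul_sub_div_two {q : ℝ} (hq : 0 ≤ q) (d : ℝ) :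
    (√(4 * q + d ^ 2) + d) / 2 * ((√(4 * q + d ^ 2) - d) / 2) = q := by
  have hs := Real.sq_sqrt (by positivity : 0 ≤ 4 * q + d ^ 2)
  linear_combination hs / 4

theorem coeff_sq_sum_eq_one {α lam a c ρ₁ ρ₂ : ℝ} (hα : 0 < α)
    (hrel : 1/α + lam^2 + a*c - c^2 = 0) (hρ₁ : 0 < ρ₁) (hρ₂ : 0 < ρ₂)
    (hprod : ρ₁ * ρ₂ = c * (2*c - a)) :
    (lam / √(lam^2 + 1/α)) ^ 2 + (1 / √(α*(c - a)*(2*c - a))) ^ 2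
      + (1 / √(α*ρ₁*(ρ₁ + ρ₂))) ^ 2 + (1 / √(α*ρ₂*(ρ₁ + ρ₂))) ^ 2 = 1 := by
  have hL : lam^2 + 1/α = c * (c - a) := by linear_combination hrel
  have hcc : 0 < c * (c - a) := hL ▸ by positivity
  have hc : c ≠ 0 := by rintro rfl; simp at hcc
  have hca : c - a ≠ 0 := by rintro h; simp [h] at hcc
  have hca2 : 0 < (c - a) * (2*c - a) := by nlinarith [sq_nonneg (c - a)]
  have h2ca : 2*c - a ≠ 0 := right_ne_zero_of_mul hca2.ne'
  have hρ : ρ₁ + ρ₂ ≠ 0 := by positivity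
  have partial_ρ :
      1 / (ρ₁ * (ρ₁ + ρ₂)) + 1 / (ρ₂ * (ρ₁ + ρ₂)) = 1 / (c * (2*c - a)) := by
    rw [one_div_mul_add_add_one_div_mul_add hρ₁.ne' hρ₂.ne' hρ, hprod]
  have partial_c : 1 / ((c - a) * (2*c - a)) + 1 / (c * (2*c - a)) = 1 / (c * (c - a)) := by
    have hsplit : 2*c - a = (c - a) + c := by ring
    rw [hsplit, one_div_mul_add_add_one_div_mul_add hca hc (hsplit ▸ h2ca), mul_comm]
  simp only [div_pow, one_pow]
  rw [Real.sq_sqrt (by positivity), Real.sq_sqrt (by rw [mul_assoc]; exact (mul_pos hα hca2).le),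
    Real.sq_sqrt (by positivity), Real.sq_sqrt (by positivity), hL]
  calc lam ^ 2 / (c * (c - a)) + 1 / (α * (c - a) * (2*c - a))
        + 1 / (α * ρ₁ * (ρ₁ + ρ₂)) + 1 / (α * ρ₂ * (ρ₁ + ρ₂))
      = lam ^ 2 / (c * (c - a)) + 1 / α * (1 / ((c - a) * (2*c - a))
        + (1 / (ρ₁ * (ρ₁ + ρ₂)) + 1 / (ρ₂ * (ρ₁ + ρ₂)))) := by
        simp only [mul_assoc α, one_div, mul_inv]; ring
    _ = (lam ^ 2 + 1 / α) / (c * (c - a)) := by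
        rw [partial_ρ, partial_c]; ring
    _ = 1 := by rw [hL, div_self hcc.ne']

theorem stmt_2_general (α lam a c d : ℝ) (hα : 0 < α)
    (hrel : 1/α + lam^2 + a*c - c^2 = 0)
    (ρ₁ ρ₂ : ℝ)
    (hρ₁ : ρ₁ = (Real.sqrt (4*c*(2*c - a) + d^2) + d)/2)
    (hρ₂ : ρ₂ = (Real.sqrt (4*c*(2*c - a) + d^2) - d)/2)
    (f : ℝ → ℝ → ℝ → EuclideanSpace ℂ (Fin 4))
    (hf : ∀ u v w : ℝ, f u v w = (WithLp.equiv 2 (Fin 4 → ℂ)).symm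
      ![((lam / Real.sqrt (lam^2 + 1/α) : ℝ) : ℂ)
          * Complex.exp (Complex.I * ((u/(α*lam) : ℝ) : ℂ)),
        ((1 / Real.sqrt (α*(c - a)*(2*c - a)) : ℝ) : ℂ)
          * Complex.exp (-Complex.I * ((lam*u - (c - a)*v : ℝ) : ℂ)),
        ((1 / Real.sqrt (α*ρ₁*(ρ₁ + ρ₂)) : ℝ) : ℂ)
          * Complex.exp (-Complex.I * ((lam*u + c*v + ρ₁*w : ℝ) : ℂ)),
        ((1 / Real.sqrt (α*ρ₂*(ρ₁ + ρ₂)) : ℝ) : ℂ)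
          * Complex.exp (-Complex.I * ((lam*u + c*v - ρ₂*w : ℝ) : ℂ))]) :
    ∀ u v w : ℝ, ‖f u v w‖ = 1 := by
  have hcc : 0 < c * (c - a) := by nlinarith [sq_nonneg lam, one_div_pos.2 hα]
  have hq : 0 < c * (2*c - a) := by nlinarith [sq_nonneg c]
  rw [mul_assoc] at hρ₁ hρ₂
  have hd := abs_lt_sqrt_four_mul_add_sq hq d
  have hρ₁pos : 0 < ρ₁ := by rw [hρ₁]; linarith [neg_abs_le d]
  have hρ₂pos : 0 < ρ₂ := by rw [hρ₂]; linarith [le_abs_self d]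
  have hprod : ρ₁ * ρ₂ = c * (2*c - a) := by
    rw [hρ₁, hρ₂, sqrt_four_mul_add_sq_add_div_two_mul_sub_div_two hq.le]
  intro u v w
  rw [hf, EuclideanSpace.norm_eq, Fin.sum_univ_four]
  simp only [WithLp.equiv_symm_apply, WithLp.ofLp_toLp, Matrix.cons_val_zero, Matrix.cons_val_one,
    Matrix.cons_val_two, Matrix.cons_val_three, Matrix.head_cons, Matrix.tail_cons, norm_mul,
    Complex.norm_real, Real.norm_eq_abs, Complex.norm_exp_I_mul_ofReal,
    Complex.norm_exp_neg_I_mul_ofReal, mul_one, sq_abs]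
  rw [coeff_sq_sum_eq_one hα hrel hρ₁pos hρ₂pos hprod, Real.sqrt_one]

/-- the flat Legendrian immersion f maps ℝ³ into the unit sphere S⁷ ⊂ ℂ⁴. -/
theorem stmt_2 (α lam a c d : ℝ) (hα : 0 < α) (hlam : lam < 0)
    (hc : c < 0) (ha : 0 < a) (hd : 0 ≤ d)
    (hrel : 1/α + lam^2 + a*c - c^2 = 0)
    (ρ₁ ρ₂ : ℝ)
    (hρ₁ : ρ₁ = (Real.sqrt (4*c*(2*c - a) + d^2) + d)/2)
    (hρ₂ : ρ₂ = (Real.sqrt (4*c*(2*c - a) + d^2) - d)/2)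
    (f : ℝ → ℝ → ℝ → EuclideanSpace ℂ (Fin 4))
    (hf : ∀ u v w : ℝ, f u v w = (WithLp.equiv 2 (Fin 4 → ℂ)).symm
      ![((lam / Real.sqrt (lam^2 + 1/α) : ℝ) : ℂ)
          * Complex.exp (Complex.I * ((u/(α*lam) : ℝ) : ℂ)),
        ((1 / Real.sqrt (α*(c - a)*(2*c - a)) : ℝ) : ℂ)
          * Complex.exp (-Complex.I * ((lam*u - (c - a)*v : ℝ) : ℂ)),
        ((1 / Real.sqrt (α*ρ₁*(ρ₁ + ρ₂)) : ℝ) : ℂ)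
          * Complex.exp (-Complex.I * ((lam*u + c*v + ρ₁*w : ℝ) : ℂ)),
        ((1 / Real.sqrt (α*ρ₂*(ρ₁ + ρ₂)) : ℝ) : ℂ)
          * Complex.exp (-Complex.I * ((lam*u + c*v - ρ₂*w : ℝ) : ℂ))]) :
    ∀ u v w : ℝ, ‖f u v w‖ = 1 :=
  stmt_2_general α lam a c d hα hrel ρ₁ ρ₂ hρ₁ hρ₂ f hf
end

section
/- Let α > 0, λ < 0, and let a, c, d be real numbers with c < 0 < a, d ≥ 0, satisfying 1/α + λ² + a·c − c² = 0. Set ρ₁ = (√(4c(2c−a)+d²)+d)/2 and ρ₂ = (√(4c(2c−a)+d²)−d)/2, and define f : ℝ³ → ℂ⁴ by f(u,v,w) = ( (λ/√(λ²+1/α))·exp(i·u/(αλ)), (1/√(α(c−a)(2c−a)))·exp(−i(λu−(c−a)v)), (1/√(α·ρ₁(ρ₁+ρ₂)))·exp(−i(λu+cv+ρ₁w)), (1/√(α·ρ₂(ρ₁+ρ₂)))·exp(−i(λu+cv−ρ₂w)) ). Then at every point (u,v,w) the three partial derivatives satisfy ⟨∂f/∂u, i·f⟩_ℝ = 0, ⟨∂f/∂v,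 i·f⟩_ℝ = 0, and ⟨∂f/∂w, i·f⟩_ℝ = 0; that is, the contact form of S⁷ pulls back to zero along f, so f is a Legendrian immersion. -/
/-!
Each coordinate of `f` is `C k * exp (i θₖ)` with `θₖ` affine in `(u, v, w)`; the linear parts
form the rows of a real `4 × 3` phase matrix `A`. Differentiating in the `j`-th variable multiplies
coordinate `k` by `i A k j`, so `⟨∂ⱼ f, i f⟩_ℝ = ∑ₖ A k j C k ²`: the contact condition says that
the squared amplitudes are orthogonal to the columns of `A`. Since `λ² + 1/α = c (c - a)` and
`ρ₁ ρ₂ = c (2c - a)` (`ρ₁` and `-ρ₂` are the roots of `x² - d x - c (2c - a)`), these are three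
identities between rational functions.
-/

open scoped ComplexInnerProductSpace

open Complex

noncomputable section

section PhaseCurves

variable {n : ℕ}

def phaseCurve (C p m : Fin n → ℝ) (t : ℝ) : EuclideanSpace ℂ (Fin n) :=
  WithLp.toLp 2 fun k => (C k : ℂ) * exp (((p k + m k * t : ℝ) : ℂ) * I)

lemma hasDerivAt_phaseCurve (C p m : Fin n → ℝ) (t : ℝ) :
    HasDerivAt (phaseCurve C p m)
      (WithLp.toLp 2 fun k => (m k : ℂ) * (I • phaseCurve C p m t) k) t := by
  have hcoord (k : Fin n) : HasDerivAt (fun s => (C k : ℂ) * exp (((p k + m k * s : ℝ) : ℂ) * I))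
      (m k * (I • phaseCurve C p m t) k) t := by
    refine ((((hasDerivAt_id t).const_mul (m k)).const_add (p k)).ofReal_comp.mul_const
      I).cexp.const_mul (C k : ℂ) |>.congr_deriv ?_
    simp only [phaseCurve, PiLp.smul_apply, smul_eq_mul, id, mul_one]
    ring
  exact (PiLp.hasFDerivAt_toLp (𝕜 := ℝ) 2 _).comp_hasDerivAt t (hasDerivAt_pi.mpr hcoord)

lemma re_inner_toLp_ofReal_mul_self (m : Fin n → ℝ) (w : EuclideanSpace ℂ (Fin n)) :
    (⟪WithLp.toLp 2 fun k => (m k : ℂ) * w k, w⟫).re = ∑ k, m k * ‖w k‖ ^ 2 := by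
  simp only [PiLp.inner_apply, re_sum]
  refine Finset.sum_congr rfl fun k _ => ?_
  rw [← smul_eq_mul, inner_smul_left, conj_ofReal, inner_self_eq_norm_sq_to_K, re_ofReal_mul]
  norm_cast

lemma re_inner_deriv_phaseCurve (C p m : Fin n → ℝ) (t : ℝ) :
    (⟪deriv (phaseCurve C p m) t, I • phaseCurve C p m t⟫).re = ∑ k, m k * C k ^ 2 := by
  rw [(hasDerivAt_phaseCurve C p m t).deriv, re_inner_toLp_ofReal_mul_self]
  simp only [phaseCurve, PiLp.smul_apply, smul_eq_mul, norm_mul, norm_I,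
    norm_real, norm_exp_ofReal_mul_I, one_mul, mul_one, Real.norm_eq_abs, sq_abs]

def phaseMap (C : Fin n → ℝ) (A : Matrix (Fin n) (Fin 3) ℝ) (u v w : ℝ) :
    EuclideanSpace ℂ (Fin n) :=
  WithLp.toLp 2 fun k => (C k : ℂ) * exp (((A k 0 * u + A k 1 * v + A k 2 * w : ℝ) : ℂ) * I)

lemma re_inner_deriv_phaseMap (C : Fin n → ℝ) (A : Matrix (Fin n) (Fin 3) ℝ) (u v w : ℝ) :
    (⟪deriv (fun t => phaseMap C A t v w) u, I • phaseMap C A u v w⟫).re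
        = ∑ k, A k 0 * C k ^ 2 ∧
      (⟪deriv (fun t => phaseMap C A u t w) v, I • phaseMap C A u v w⟫).re
        = ∑ k, A k 1 * C k ^ 2 ∧
      (⟪deriv (fun t => phaseMap C A u v t) w, I • phaseMap C A u v w⟫).re
        = ∑ k, A k 2 * C k ^ 2 := by
  have hu : (fun t => phaseMap C A t v w)
      = phaseCurve C (fun k => A k 1 * v + A k 2 * w) (A · 0) := by
    funext t; simp only [phaseMap, phaseCurve]; congr! 5; push_cast; ring
  have hv : (fun t => phaseMap C A u t w)
      = phaseCurve C (fun k => A k 0 * u + A k 2 * w) (A · 1) := by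
    funext t; simp only [phaseMap, phaseCurve]; congr! 5; push_cast; ring
  have hw : (fun t => phaseMap C A u v t)
      = phaseCurve C (fun k => A k 0 * u + A k 1 * v) (A · 2) := rfl
  refine ⟨?_, ?_, ?_⟩
  · rw [hu, show phaseMap C A u v w = _ from congrFun hu u, re_inner_deriv_phaseCurve]
  · rw [hv, show phaseMap C A u v w = _ from congrFun hv v, re_inner_deriv_phaseCurve]
  · rw [hw, show phaseMap C A u v w = _ from congrFun hw w, re_inner_deriv_phaseCurve]

end PhaseCurves

lemma pos_pos_mul_of_eq_half_sqrt {P d ρ₁ ρ₂ : ℝ} (hP : 0 < P)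
    (hρ₁ : ρ₁ = (√(4 * P + d ^ 2) + d) / 2) (hρ₂ : ρ₂ = (√(4 * P + d ^ 2) - d) / 2) :
    0 < ρ₁ ∧ 0 < ρ₂ ∧ ρ₁ * ρ₂ = P := by
  have hd : |d| < √(4 * P + d ^ 2) := (Real.lt_sqrt (abs_nonneg d)).2 (by rw [sq_abs]; linarith)
  have hsq := Real.sq_sqrt (show 0 ≤ 4 * P + d ^ 2 by positivity)
  subst hρ₁ hρ₂
  exact ⟨by linarith [neg_abs_le d], by linarith [le_abs_self d], by linear_combination hsq / 4⟩

def amplitudes (α lam a c ρ₁ ρ₂ : ℝ) : Fin 4 → ℝ :=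
  ![lam / √(lam ^ 2 + 1 / α), 1 / √(α * (c - a) * (2 * c - a)),
    1 / √(α * ρ₁ * (ρ₁ + ρ₂)), 1 / √(α * ρ₂ * (ρ₁ + ρ₂))]

def phaseMatrix (α lam a c ρ₁ ρ₂ : ℝ) : Matrix (Fin 4) (Fin 3) ℝ :=
  !![1 / (α * lam), 0, 0; -lam, c - a, 0; -lam, -c, -ρ₁; -lam, -c, ρ₂]

lemma sq_div_sqrt (x : ℝ) {y : ℝ} (hy : 0 ≤ y) : (x / √y) ^ 2 = x ^ 2 / y := by
  rw [div_pow, Real.sq_sqrt hy]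

lemma sum_phaseMatrix_mul_amplitudes_sq {α lam a c ρ₁ ρ₂ : ℝ} (hα : 0 < α) (hlam : lam ≠ 0)
    (hc : c < 0) (ha : 0 < a) (hrel : 1 / α + lam ^ 2 + a * c - c ^ 2 = 0)
    (hρ₁ : 0 < ρ₁) (hρ₂ : 0 < ρ₂) (hρ : ρ₁ * ρ₂ = c * (2 * c - a)) (j : Fin 3) :
    ∑ k, phaseMatrix α lam a c ρ₁ ρ₂ k j * amplitudes α lam a c ρ₁ ρ₂ k ^ 2 = 0 := by
  have hca : c - a < 0 := by linarith
  have h2ca : 2 * c - a < 0 := by linarith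
  -- the form in which `field_simp` looks for the nonvanishing of `2 * c - a`
  have hc2a : c * 2 - a ≠ 0 := by linarith
  have hlc : lam ^ 2 + 1 / α = c * (c - a) := by linear_combination hrel
  have hq0 : (lam / √(lam ^ 2 + 1 / α)) ^ 2 = lam ^ 2 / (c * (c - a)) := by
    rw [sq_div_sqrt _ (by positivity), hlc]
  have hq1 : (1 / √(α * (c - a) * (2 * c - a))) ^ 2 = 1 / (α * (c - a) * (2 * c - a)) := by
    rw [sq_div_sqrt _ (by nlinarith [mul_pos_of_neg_of_neg hca h2ca]), one_pow]
  have hq2 : (1 / √(α * ρ₁ * (ρ₁ + ρ₂))) ^ 2 = 1 / (α * ρ₁ * (ρ₁ + ρ₂)) := by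
    rw [sq_div_sqrt _ (by positivity), one_pow]
  have hq3 : (1 / √(α * ρ₂ * (ρ₁ + ρ₂))) ^ 2 = 1 / (α * ρ₂ * (ρ₁ + ρ₂)) := by
    rw [sq_div_sqrt _ (by positivity), one_pow]
  have hq23 :
      1 / (α * ρ₁ * (ρ₁ + ρ₂)) + 1 / (α * ρ₂ * (ρ₁ + ρ₂)) = 1 / (α * (c * (2 * c - a))) := by
    rw [← hρ]; field_simp; ring
  fin_cases j <;> simp only [Fin.sum_univ_four, amplitudes, phaseMatrix, Matrix.of_apply,
    Matrix.cons_val', Matrix.cons_val, Matrix.cons_val_zero, Matrix.cons_val_one,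
    Matrix.cons_val_fin_one, Fin.zero_eta, Fin.mk_one, Fin.reduceFinMk, Fin.isValue,
    hq0, hq1, hq2, hq3, zero_mul, zero_add, add_zero]
  · rw [add_assoc, ← mul_add, hq23]
    field_simp [hc.ne, hca.ne]
    ring
  · rw [add_assoc, ← mul_add, hq23]
    field_simp [hc.ne, hca.ne]
    ring
  · field_simp
    ring

end

theorem stmt_3_general (α lam a c d : ℝ) (hα : 0 < α) (hlam : lam < 0)
    (hc : c < 0) (ha : 0 < a)
    (hrel : 1/α + lam^2 + a*c - c^2 = 0)
    (ρ₁ ρ₂ : ℝ)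
    (hρ₁ : ρ₁ = (Real.sqrt (4*c*(2*c - a) + d^2) + d)/2)
    (hρ₂ : ρ₂ = (Real.sqrt (4*c*(2*c - a) + d^2) - d)/2)
    (f : ℝ → ℝ → ℝ → EuclideanSpace ℂ (Fin 4))
    (hf : ∀ u v w : ℝ, f u v w = (WithLp.equiv 2 (Fin 4 → ℂ)).symm
      ![((lam / Real.sqrt (lam^2 + 1/α) : ℝ) : ℂ)
          * Complex.exp (Complex.I * ((u/(α*lam) : ℝ) : ℂ)),
        ((1 / Real.sqrt (α*(c - a)*(2*c - a)) : ℝ) : ℂ)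
          * Complex.exp (-Complex.I * ((lam*u - (c - a)*v : ℝ) : ℂ)),
        ((1 / Real.sqrt (α*ρ₁*(ρ₁ + ρ₂)) : ℝ) : ℂ)
          * Complex.exp (-Complex.I * ((lam*u + c*v + ρ₁*w : ℝ) : ℂ)),
        ((1 / Real.sqrt (α*ρ₂*(ρ₁ + ρ₂)) : ℝ) : ℂ)
          * Complex.exp (-Complex.I * ((lam*u + c*v - ρ₂*w : ℝ) : ℂ))]) :
    ∀ u v w : ℝ,
      (⟪deriv (fun t => f t v w) u, Complex.I • f u v w⟫).re = 0 ∧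
      (⟪deriv (fun t => f u t w) v, Complex.I • f u v w⟫).re = 0 ∧
      (⟪deriv (fun t => f u v t) w, Complex.I • f u v w⟫).re = 0 := by
  have hf_eq : f = phaseMap (amplitudes α lam a c ρ₁ ρ₂) (phaseMatrix α lam a c ρ₁ ρ₂) := by
    funext u v w
    rw [hf]
    ext k
    fin_cases k <;>
      simp only [phaseMap, PiLp.toLp_apply, WithLp.equiv_symm_apply, amplitudes, phaseMatrix,
        Matrix.of_apply, Matrix.cons_val', Matrix.cons_val, Matrix.cons_val_zero,
        Matrix.cons_val_one, Matrix.cons_val_fin_one, Fin.zero_eta, Fin.mk_one, Fin.reduceFinMk,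
        Fin.isValue] <;>
      congr 2 <;> push_cast <;> ring
  obtain ⟨hρ₁pos, hρ₂pos, hρ⟩ := pos_pos_mul_of_eq_half_sqrt (P := c * (2 * c - a)) (d := d)
    (by nlinarith) (hρ₁.trans (by rw [mul_assoc])) (hρ₂.trans (by rw [mul_assoc]))
  have hcol := sum_phaseMatrix_mul_amplitudes_sq hα hlam.ne hc ha hrel hρ₁pos hρ₂pos hρ
  intro u v w
  obtain ⟨hu, hv, hw⟩ := re_inner_deriv_phaseMap (amplitudes α lam a c ρ₁ ρ₂)
    (phaseMatrix α lam a c ρ₁ ρ₂) u v w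
  subst hf_eq
  exact ⟨hu.trans (hcol 0), hv.trans (hcol 1), hw.trans (hcol 2)⟩

/-- the contact form of S⁷ pulls back to zero along f, i.e. f is Legendrian. -/
theorem stmt_3 (α lam a c d : ℝ) (hα : 0 < α) (hlam : lam < 0)
    (hc : c < 0) (ha : 0 < a) (hd : 0 ≤ d)
    (hrel : 1/α + lam^2 + a*c - c^2 = 0)
    (ρ₁ ρ₂ : ℝ)
    (hρ₁ : ρ₁ = (Real.sqrt (4*c*(2*c - a) + d^2) + d)/2)
    (hρ₂ : ρ₂ = (Real.sqrt (4*c*(2*c - a) + d^2) - d)/2)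
    (f : ℝ → ℝ → ℝ → EuclideanSpace ℂ (Fin 4))
    (hf : ∀ u v w : ℝ, f u v w = (WithLp.equiv 2 (Fin 4 → ℂ)).symm
      ![((lam / Real.sqrt (lam^2 + 1/α) : ℝ) : ℂ)
          * Complex.exp (Complex.I * ((u/(α*lam) : ℝ) : ℂ)),
        ((1 / Real.sqrt (α*(c - a)*(2*c - a)) : ℝ) : ℂ)
          * Complex.exp (-Complex.I * ((lam*u - (c - a)*v : ℝ) : ℂ)),
        ((1 / Real.sqrt (α*ρ₁*(ρ₁ + ρ₂)) : ℝ) : ℂ)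
          * Complex.exp (-Complex.I * ((lam*u + c*v + ρ₁*w : ℝ) : ℂ)),
        ((1 / Real.sqrt (α*ρ₂*(ρ₁ + ρ₂)) : ℝ) : ℂ)
          * Complex.exp (-Complex.I * ((lam*u + c*v - ρ₂*w : ℝ) : ℂ))]) :
    ∀ u v w : ℝ,
      (⟪deriv (fun t => f t v w) u, Complex.I • f u v w⟫).re = 0 ∧
      (⟪deriv (fun t => f u t w) v, Complex.I • f u v w⟫).re = 0 ∧
      (⟪deriv (fun t => f u v t) w, Complex.I • f u v w⟫).re = 0 :=
  stmt_3_general α lam a c d hα hlam hc ha hrel ρ₁ ρ₂ hρ₁ hρ₂ f hf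
end

section
/- Let α > 0, λ < 0, and let a, c, d be real numbers with c < 0 < a, d ≥ 0, satisfying 1/α + λ² + a·c − c² = 0. Set ρ₁ = (√(4c(2c−a)+d²)+d)/2 and ρ₂ = (√(4c(2c−a)+d²)−d)/2, and define f : ℝ³ → ℂ⁴ by f(u,v,w) = ( (λ/√(λ²+1/α))·exp(i·u/(αλ)), (1/√(α(c−a)(2c−a)))·exp(−i(λu−(c−a)v)), (1/√(α·ρ₁(ρ₁+ρ₂)))·exp(−i(λu+cv+ρ₁w)), (1/√(α·ρ₂(ρ₁+ρ₂)))·exp(−i(λu+cv−ρ₂w)) ). Then at every point the real inner products of the coordinate partial derivatives are ⟨∂f/∂u, ∂f/∂u⟩_ℝ = ⟨∂f/∂v, ∂f/∂v⟩_ℝ = ⟨∂f/∂w, ∂f/∂w⟩_ℝ = 1/α and ⟨∂f/∂u, ∂f/∂v⟩_ℝ = ⟨∂f/∂u, ∂f/∂w⟩_ℝ = ⟨∂f/∂v, ∂f/∂w⟩_ℝ = 0. In particular the metric induced by f on ℝ³ is a constant multiple of the Euclidean metric, hence flat. -/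
/-!
Every coordinate of `f` is a rotating circle `r_k exp(± i ⟨ω_k, (u, v, w)⟩)` with linear phase,
so the partial derivative `∂_j f` has coordinates `± i ω_kj f_k`, and
`Re ⟪∂_j f, ∂_l f⟫ = ∑_k r_k² ω_kj ω_kl`. The theorem is thus the algebraic fact that the
frequencies form a tight frame, `∑_k r_k² ω_k ω_kᵀ = α⁻¹ · 1`. This rests on
`ρ₁ ρ₂ = c (2c - a)` (`ρ₁` and `-ρ₂` are the roots of `x² - d x - c (2c - a)`) and on
`c (c - a) = λ² + 1/α`, which also forces `c`, `c - a` and `2c - a` to share a sign, so that all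
square roots in `f` are taken of positive numbers.
-/

open scoped ComplexInnerProductSpace
open Complex

section RotatingCurves

variable {ι : Type*} [Fintype ι]

theorem hasDerivAt_toLp_ofReal_mul_cexp (r : ι → ℝ) (e : ι → ℂ)
    {θ : ι → ℝ → ℝ} {θ' : ι → ℝ} {t : ℝ} (hθ : ∀ k, HasDerivAt (θ k) (θ' k) t) :
    HasDerivAt (fun s => WithLp.toLp 2 fun k => (r k : ℂ) * exp (e k * θ k s))
      (WithLp.toLp 2 fun k => (r k : ℂ) * (e k * θ' k) * exp (e k * θ k t)) t := by
  have hcoord : HasDerivAt (fun s k => (r k : ℂ) * exp (e k * θ k s))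
      (fun k => (r k : ℂ) * (e k * θ' k) * exp (e k * θ k t)) t := hasDerivAt_pi.2 fun k =>
    ((((hθ k).ofReal_comp).const_mul (e k)).cexp.const_mul (r k : ℂ)).congr_deriv (by ring)
  exact (PiLp.hasFDerivAt_toLp (𝕜 := ℝ) 2 _).comp_hasDerivAt t hcoord

noncomputable def linearPhaseMap (r : ι → ℝ) (e : ι → ℂ) (ω : ι → Fin 3 → ℝ) (u v w : ℝ) :
    EuclideanSpace ℂ ι :=
  WithLp.toLp 2 fun k => (r k : ℂ) * exp (e k * ↑(u * ω k 0 + v * ω k 1 + w * ω k 2))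

variable (r : ι → ℝ) (e : ι → ℂ) (ω : ι → Fin 3 → ℝ) (u v w : ℝ)

theorem deriv_linearPhaseMap_fst : deriv (fun t => linearPhaseMap r e ω t v w) u =
    WithLp.toLp 2 fun k => (r k : ℂ) * (e k * ω k 0)
      * exp (e k * ↑(u * ω k 0 + v * ω k 1 + w * ω k 2)) :=
  (hasDerivAt_toLp_ofReal_mul_cexp r e fun _ =>
    ((hasDerivAt_mul_const _).add_const _).add_const _).deriv

theorem deriv_linearPhaseMap_snd : deriv (fun t => linearPhaseMap r e ω u t w) v =
    WithLp.toLp 2 fun k => (r k : ℂ) * (e k * ω k 1)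
      * exp (e k * ↑(u * ω k 0 + v * ω k 1 + w * ω k 2)) :=
  (hasDerivAt_toLp_ofReal_mul_cexp r e fun _ =>
    ((hasDerivAt_mul_const _).const_add _).add_const _).deriv

theorem deriv_linearPhaseMap_thd : deriv (fun t => linearPhaseMap r e ω u v t) w =
    WithLp.toLp 2 fun k => (r k : ℂ) * (e k * ω k 2)
      * exp (e k * ↑(u * ω k 0 + v * ω k 1 + w * ω k 2)) :=
  (hasDerivAt_toLp_ofReal_mul_cexp r e fun _ => (hasDerivAt_mul_const _).const_add _).deriv

theorem inner_ofReal_mul_mul_cexp (r p q θ : ℝ) {e : ℂ} (he : e.re = 0) :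
    ⟪(r : ℂ) * (e * p) * exp (e * θ), (r : ℂ) * (e * q) * exp (e * θ)⟫
      = ((r ^ 2 * ‖e‖ ^ 2 * p * q : ℝ) : ℂ) := by
  have hexp : ‖exp (e * θ)‖ = 1 := by simp [Complex.norm_exp, he]
  calc ⟪(r : ℂ) * (e * p) * exp (e * θ), (r : ℂ) * (e * q) * exp (e * θ)⟫
      = r ^ 2 * p * q * ((starRingEnd ℂ) e * e)
          * ((starRingEnd ℂ) (exp (e * θ)) * exp (e * θ)) := by
        simp only [RCLike.inner_apply, map_mul, conj_ofReal]; ring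
    _ = ((r ^ 2 * ‖e‖ ^ 2 * p * q : ℝ) : ℂ) := by
        rw [Complex.conj_mul', Complex.conj_mul', hexp]; push_cast; ring

theorem re_inner_toLp_ofReal_mul_mul_cexp (r : ι → ℝ) {e : ι → ℂ}
    (he : ∀ k, (e k).re = 0) (θ p q : ι → ℝ) :
    (⟪WithLp.toLp 2 fun k => (r k : ℂ) * (e k * p k) * exp (e k * θ k),
      WithLp.toLp 2 fun k => (r k : ℂ) * (e k * q k) * exp (e k * θ k)⟫).re
      = ∑ k, r k ^ 2 * ‖e k‖ ^ 2 * p k * q k := by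
  simp only [PiLp.inner_apply, inner_ofReal_mul_mul_cexp _ _ _ _ (he _), ← ofReal_sum,
    ofReal_re]

end RotatingCurves

namespace FlatLegendrian

noncomputable def amplitude (α lam a c ρ₁ ρ₂ : ℝ) : Fin 4 → ℝ :=
  ![lam / √(lam ^ 2 + 1 / α), 1 / √(α * (c - a) * (2 * c - a)),
    1 / √(α * ρ₁ * (ρ₁ + ρ₂)), 1 / √(α * ρ₂ * (ρ₁ + ρ₂))]

noncomputable def frequency (α lam a c ρ₁ ρ₂ : ℝ) : Fin 4 → Fin 3 → ℝ :=
  ![![1 / (α * lam), 0, 0], ![lam, -(c - a), 0], ![lam, c, ρ₁], ![lam, c, -ρ₂]]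

theorem pos_and_pos_and_mul_eq_of_eq_sqrt {P d ρ₁ ρ₂ : ℝ} (hP : 0 < P)
    (hρ₁ : ρ₁ = (√(4 * P + d ^ 2) + d) / 2) (hρ₂ : ρ₂ = (√(4 * P + d ^ 2) - d) / 2) :
    0 < ρ₁ ∧ 0 < ρ₂ ∧ ρ₁ * ρ₂ = P := by
  have hsq : √(4 * P + d ^ 2) ^ 2 = 4 * P + d ^ 2 := Real.sq_sqrt (by positivity)
  have habs : |d| < √(4 * P + d ^ 2) := by
    rw [← Real.sqrt_sq_eq_abs]; exact Real.sqrt_lt_sqrt (sq_nonneg d) (by linarith)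
  subst hρ₁ hρ₂
  exact ⟨by linarith [neg_abs_le d], by linarith [le_abs_self d], by linear_combination hsq / 4⟩

theorem mul_sub_pos_of_inv_add_sq_eq {α lam a c : ℝ} (hα : 0 < α)
    (hrel : 1 / α + lam ^ 2 + a * c - c ^ 2 = 0) : 0 < c * (c - a) := by
  have : 0 < 1 / α := by positivity
  nlinarith [sq_nonneg lam]

theorem mul_two_mul_sub_pos_of_mul_sub_pos {a c : ℝ} (h : 0 < c * (c - a)) :
    0 < c * (2 * c - a) ∧ 0 < (c - a) * (2 * c - a) :=
  ⟨by nlinarith [sq_nonneg c], by nlinarith [sq_nonneg (c - a)]⟩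

theorem sq_amplitude {α lam a c ρ₁ ρ₂ : ℝ} (hα : 0 < α) (hca : 0 < (c - a) * (2 * c - a))
    (hρ₁ : 0 < ρ₁) (hρ₂ : 0 < ρ₂) :
    amplitude α lam a c ρ₁ ρ₂ 0 ^ 2 = lam ^ 2 / (lam ^ 2 + 1 / α) ∧
    amplitude α lam a c ρ₁ ρ₂ 1 ^ 2 = 1 / (α * (c - a) * (2 * c - a)) ∧
    amplitude α lam a c ρ₁ ρ₂ 2 ^ 2 = 1 / (α * ρ₁ * (ρ₁ + ρ₂)) ∧
    amplitude α lam a c ρ₁ ρ₂ 3 ^ 2 = 1 / (α * ρ₂ * (ρ₁ + ρ₂)) := by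
  have : 0 < α * (c - a) * (2 * c - a) := by rw [mul_assoc]; positivity
  simp only [amplitude, Matrix.cons_val, div_pow, one_pow]
  refine ⟨?_, ?_, ?_, ?_⟩ <;> rw [Real.sq_sqrt (by positivity)]

theorem weight_relations {α lam a c ρ₁ ρ₂ R₀ R₁ R₂ R₃ : ℝ} (hα : 0 < α) (hlam : lam ≠ 0)
    (hrel : 1 / α + lam ^ 2 + a * c - c ^ 2 = 0) (hρ₁ : 0 < ρ₁) (hρ₂ : 0 < ρ₂)
    (hprod : ρ₁ * ρ₂ = c * (2 * c - a)) (h0 : R₀ = lam ^ 2 / (lam ^ 2 + 1 / α))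
    (h1 : R₁ = 1 / (α * (c - a) * (2 * c - a))) (h2 : R₂ = 1 / (α * ρ₁ * (ρ₁ + ρ₂)))
    (h3 : R₃ = 1 / (α * ρ₂ * (ρ₁ + ρ₂))) :
    R₀ * (1 / (α * lam)) ^ 2 + lam ^ 2 * (R₁ + R₂ + R₃) = 1 / α ∧
    (c - a) ^ 2 * R₁ + c ^ 2 * (R₂ + R₃) = 1 / α ∧
    ρ₁ ^ 2 * R₂ + ρ₂ ^ 2 * R₃ = 1 / α ∧
    c * (R₂ + R₃) = (c - a) * R₁ ∧
    ρ₁ * R₂ = ρ₂ * R₃ := by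
  have hcca := mul_sub_pos_of_inv_add_sq_eq hα hrel
  have hca2ca := (mul_two_mul_sub_pos_of_mul_sub_pos hcca).2
  have hc : c ≠ 0 := by rintro rfl; simp at hcca
  have hca : c - a ≠ 0 := by rintro h; simp [h] at hcca
  have hlam2 : lam ^ 2 + 1 / α = c * (c - a) := by linear_combination hrel
  have h23 : R₂ + R₃ = 1 / (α * c * (2 * c - a)) := by
    rw [h2, h3, mul_assoc α c, ← hprod]; field_simp; ring
  have hv : c * (R₂ + R₃) = (c - a) * R₁ := by rw [h23, h1]; field_simp
  have h1' : (c - a) * (2 * c - a) * R₁ = 1 / α := by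
    rw [h1, mul_assoc α, mul_one_div, div_mul_cancel_right₀ hca2ca.ne', one_div]
  have hu : R₀ * (1 / (α * lam)) ^ 2 + lam ^ 2 * (R₁ + R₂ + R₃) = 1 / α := by
    have h123 : c * (c - a) * (R₁ + R₂ + R₃) = 1 / α := by
      linear_combination (c - a) * hv + h1'
    have hK : α * lam ^ 2 + 1 = α * (c * (c - a)) := by
      field_simp at hrel; linear_combination hrel
    have hS : R₁ + R₂ + R₃ = 1 / α / (c * (c - a)) := by rw [← h123]; field_simp
    rw [h0, hlam2, hS]; field_simp; linear_combination hK
  refine ⟨hu, by linear_combination c * hv + h1', by rw [h2, h3]; field_simp, hv, ?_⟩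
  rw [h2, h3]; field_simp

theorem sum_sq_amplitude_mul_frequency {α lam a c ρ₁ ρ₂ : ℝ} (hα : 0 < α) (hlam : lam ≠ 0)
    (hrel : 1 / α + lam ^ 2 + a * c - c ^ 2 = 0) (hρ₁ : 0 < ρ₁) (hρ₂ : 0 < ρ₂)
    (hprod : ρ₁ * ρ₂ = c * (2 * c - a)) (j l : Fin 3) :
    ∑ k, amplitude α lam a c ρ₁ ρ₂ k ^ 2 * frequency α lam a c ρ₁ ρ₂ k j
      * frequency α lam a c ρ₁ ρ₂ k l = if j = l then 1 / α else 0 := by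
  have hca2ca := (mul_two_mul_sub_pos_of_mul_sub_pos (mul_sub_pos_of_inv_add_sq_eq hα hrel)).2
  obtain ⟨h0, h1, h2, h3⟩ := sq_amplitude (lam := lam) hα hca2ca hρ₁ hρ₂
  obtain ⟨huu, hvv, hww, hv, hw⟩ :=
    weight_relations hα hlam hrel hρ₁ hρ₂ hprod h0 h1 h2 h3
  simp only [Fin.sum_univ_four]
  fin_cases j <;> fin_cases l <;> simp [frequency]
  · linear_combination huu
  · linear_combination lam * hv
  · linear_combination lam * hw
  · linear_combination lam * hv
  · linear_combination hvv
  · linear_combination c * hw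
  · linear_combination lam * hw
  · linear_combination c * hw
  · linear_combination hww

theorem linearPhaseMap_amplitude_frequency (α lam a c ρ₁ ρ₂ u v w : ℝ) :
    linearPhaseMap (amplitude α lam a c ρ₁ ρ₂) ![I, -I, -I, -I] (frequency α lam a c ρ₁ ρ₂)
      u v w = (WithLp.equiv 2 (Fin 4 → ℂ)).symm
      ![((lam / √(lam ^ 2 + 1 / α) : ℝ) : ℂ) * exp (I * ((u / (α * lam) : ℝ) : ℂ)),
        ((1 / √(α * (c - a) * (2 * c - a)) : ℝ) : ℂ)
          * exp (-I * ((lam * u - (c - a) * v : ℝ) : ℂ)),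
        ((1 / √(α * ρ₁ * (ρ₁ + ρ₂)) : ℝ) : ℂ) * exp (-I * ((lam * u + c * v + ρ₁ * w : ℝ) : ℂ)),
        ((1 / √(α * ρ₂ * (ρ₁ + ρ₂)) : ℝ) : ℂ)
          * exp (-I * ((lam * u + c * v - ρ₂ * w : ℝ) : ℂ))] := by
  rw [linearPhaseMap, WithLp.equiv_symm_apply]
  congr 1
  funext k
  fin_cases k <;> simp only [amplitude, frequency, Fin.reduceFinMk, Fin.isValue,
    Matrix.cons_val] <;> congr 3 <;> push_cast <;> ring

end FlatLegendrian

open FlatLegendrian in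
theorem stmt_4_general (α lam a c d : ℝ) (hα : 0 < α) (hlam : lam < 0)
    (hrel : 1/α + lam^2 + a*c - c^2 = 0)
    (ρ₁ ρ₂ : ℝ)
    (hρ₁ : ρ₁ = (Real.sqrt (4*c*(2*c - a) + d^2) + d)/2)
    (hρ₂ : ρ₂ = (Real.sqrt (4*c*(2*c - a) + d^2) - d)/2)
    (f : ℝ → ℝ → ℝ → EuclideanSpace ℂ (Fin 4))
    (hf : ∀ u v w : ℝ, f u v w = (WithLp.equiv 2 (Fin 4 → ℂ)).symm
      ![((lam / Real.sqrt (lam^2 + 1/α) : ℝ) : ℂ)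
          * Complex.exp (Complex.I * ((u/(α*lam) : ℝ) : ℂ)),
        ((1 / Real.sqrt (α*(c - a)*(2*c - a)) : ℝ) : ℂ)
          * Complex.exp (-Complex.I * ((lam*u - (c - a)*v : ℝ) : ℂ)),
        ((1 / Real.sqrt (α*ρ₁*(ρ₁ + ρ₂)) : ℝ) : ℂ)
          * Complex.exp (-Complex.I * ((lam*u + c*v + ρ₁*w : ℝ) : ℂ)),
        ((1 / Real.sqrt (α*ρ₂*(ρ₁ + ρ₂)) : ℝ) : ℂ)
          * Complex.exp (-Complex.I * ((lam*u + c*v - ρ₂*w : ℝ) : ℂ))]) :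
    ∀ u v w : ℝ,
      (⟪deriv (fun t => f t v w) u, deriv (fun t => f t v w) u⟫).re = 1/α ∧
      (⟪deriv (fun t => f u t w) v, deriv (fun t => f u t w) v⟫).re = 1/α ∧
      (⟪deriv (fun t => f u v t) w, deriv (fun t => f u v t) w⟫).re = 1/α ∧
      (⟪deriv (fun t => f t v w) u, deriv (fun t => f u t w) v⟫).re = 0 ∧
      (⟪deriv (fun t => f t v w) u, deriv (fun t => f u v t) w⟫).re = 0 ∧
      (⟪deriv (fun t => f u t w) v, deriv (fun t => f u v t) w⟫).re = 0 := by
  obtain ⟨hP, -⟩ := mul_two_mul_sub_pos_of_mul_sub_pos (mul_sub_pos_of_inv_add_sq_eq hα hrel)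
  obtain ⟨hρ₁pos, hρ₂pos, hprod⟩ := pos_and_pos_and_mul_eq_of_eq_sqrt hP
    (hρ₁.trans (by rw [mul_assoc])) (hρ₂.trans (by rw [mul_assoc]))
  have hunit : ∀ k, (![I, -I, -I, -I] k).re = 0 ∧ ‖![I, -I, -I, -I] k‖ = 1 := by
    intro k; fin_cases k <;> simp
  obtain rfl : f = linearPhaseMap (amplitude α lam a c ρ₁ ρ₂) ![I, -I, -I, -I]
      (frequency α lam a c ρ₁ ρ₂) :=
    funext₃ fun u v w => (hf u v w).trans (linearPhaseMap_amplitude_frequency ..).symm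
  intro u v w
  simp only [deriv_linearPhaseMap_fst, deriv_linearPhaseMap_snd, deriv_linearPhaseMap_thd,
    re_inner_toLp_ofReal_mul_mul_cexp _ (fun k => (hunit k).1), (hunit _).2, one_pow, mul_one,
    sum_sq_amplitude_mul_frequency hα hlam.ne hrel hρ₁pos hρ₂pos hprod]
  simp

/-- the induced metric of f is (1/α) times the Euclidean metric, hence flat. -/
theorem stmt_4 (α lam a c d : ℝ) (hα : 0 < α) (hlam : lam < 0)
    (hc : c < 0) (ha : 0 < a) (hd : 0 ≤ d)
    (hrel : 1/α + lam^2 + a*c - c^2 = 0)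
    (ρ₁ ρ₂ : ℝ)
    (hρ₁ : ρ₁ = (Real.sqrt (4*c*(2*c - a) + d^2) + d)/2)
    (hρ₂ : ρ₂ = (Real.sqrt (4*c*(2*c - a) + d^2) - d)/2)
    (f : ℝ → ℝ → ℝ → EuclideanSpace ℂ (Fin 4))
    (hf : ∀ u v w : ℝ, f u v w = (WithLp.equiv 2 (Fin 4 → ℂ)).symm
      ![((lam / Real.sqrt (lam^2 + 1/α) : ℝ) : ℂ)
          * Complex.exp (Complex.I * ((u/(α*lam) : ℝ) : ℂ)),
        ((1 / Real.sqrt (α*(c - a)*(2*c - a)) : ℝ) : ℂ)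
          * Complex.exp (-Complex.I * ((lam*u - (c - a)*v : ℝ) : ℂ)),
        ((1 / Real.sqrt (α*ρ₁*(ρ₁ + ρ₂)) : ℝ) : ℂ)
          * Complex.exp (-Complex.I * ((lam*u + c*v + ρ₁*w : ℝ) : ℂ)),
        ((1 / Real.sqrt (α*ρ₂*(ρ₁ + ρ₂)) : ℝ) : ℂ)
          * Complex.exp (-Complex.I * ((lam*u + c*v - ρ₂*w : ℝ) : ℂ))]) :
    ∀ u v w : ℝ,
      (⟪deriv (fun t => f t v w) u, deriv (fun t => f t v w) u⟫).re = 1/α ∧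
      (⟪deriv (fun t => f u t w) v, deriv (fun t => f u t w) v⟫).re = 1/α ∧
      (⟪deriv (fun t => f u v t) w, deriv (fun t => f u v t) w⟫).re = 1/α ∧
      (⟪deriv (fun t => f t v w) u, deriv (fun t => f u t w) v⟫).re = 0 ∧
      (⟪deriv (fun t => f t v w) u, deriv (fun t => f u v t) w⟫).re = 0 ∧
      (⟪deriv (fun t => f u t w) v, deriv (fun t => f u v t) w⟫).re = 0 :=
  stmt_4_general α lam a c d hα hlam hrel ρ₁ ρ₂ hρ₁ hρ₂ f hf
end

section
/- The quadruple of real numbers λ = −1/√5, a = 3√3/√10, c = −√3/√10, d = √2 satisfies the system (3λ²−1)(3λ⁴−4λ²+1) + λ⁴((a+c)² + d²) = 0, (a+c)(5λ² + a² + c² − 3) + c·d² = 0, d(5λ² + d² + 3c² + a·c − 3) = 0, and 1 + λ² + a·c − c² = 0, together with the side conditions −1 < λ < 0, 0 < a ≤ (λ²−1)/λ, a ≥ d ≥ 0, a > 2c, and λ² ≠ 1/3. -/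
/-! The explicit quadruple satisfies `a = -3c`, `λ² = 1/5`, `c² = 3/10`, `d² = 2`, and after
substituting `a = -3c` every equation of the system is a polynomial in `λ²`, `c²`, `d²` (times
`c` or `d`) that vanishes at these values. The inequalities follow from the signs
`λ < 0`, `c < 0 ≤ d` together with comparisons of squares: `a²λ² = 27/50 ≤ (4/5)²`,
`d² = 2 ≤ 27/10 = a²` and `λ² < 1`. -/

section ConstraintSystem

variable {lam a c d : ℝ}

theorem constraint_equations_of_sq (hac : a = -3 * c) (hlam : lam ^ 2 = 1 / 5)
    (hc : c ^ 2 = 3 / 10) (hd : d ^ 2 = 2) :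
    (3*lam^2 - 1)*(3*lam^4 - 4*lam^2 + 1) + lam^4*((a + c)^2 + d^2) = 0 ∧
    (a + c)*(5*lam^2 + a^2 + c^2 - 3) + c*d^2 = 0 ∧
    d*(5*lam^2 + d^2 + 3*c^2 + a*c - 3) = 0 ∧
    1 + lam^2 + a*c - c^2 = 0 := by
  subst hac
  refine ⟨?_, ?_, ?_, ?_⟩
  · linear_combination (9*lam^4 - 10*lam^2 + 5) * hlam + 4*lam^4 * hc + lam^4 * hd
  · linear_combination -10*c * hlam - 20*c * hc + c * hd
  · linear_combination 5*d * hlam + d * hd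
  · linear_combination hlam - 4 * hc

theorem side_conditions_of_sq (hac : a = -3 * c) (hlam_neg : lam < 0) (hlam : lam ^ 2 = 1 / 5)
    (hc_neg : c < 0) (hc : c ^ 2 = 3 / 10) (hd_nonneg : 0 ≤ d) (hd : d ^ 2 = 2) :
    -1 < lam ∧ lam < 0 ∧ 0 < a ∧ a ≤ (lam^2 - 1)/lam ∧
    a ≥ d ∧ d ≥ 0 ∧ a > 2*c ∧ lam^2 ≠ 1/3 := by
  have ha_pos : 0 < a := by linarith
  have ha : a ^ 2 = 27 / 10 := by rw [hac]; linear_combination 9 * hc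
  have hlam_gt : -1 < lam := (abs_lt_of_sq_lt_sq' (by rw [hlam]; norm_num) zero_le_one).1
  have ha_le : a ≤ (lam^2 - 1)/lam := by
    rw [le_div_iff_of_neg hlam_neg, hlam]
    have : (a * lam) ^ 2 ≤ (4 / 5) ^ 2 := by rw [mul_pow, ha, hlam]; norm_num
    linarith [(abs_le_of_sq_le_sq' this (by norm_num)).1]
  have hd_le : d ≤ a := (abs_le_of_sq_le_sq' (by rw [hd, ha]; norm_num) ha_pos.le).2
  exact ⟨hlam_gt, hlam_neg, ha_pos, ha_le, hd_le, hd_nonneg, by linarith, by rw [hlam]; norm_num⟩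

end ConstraintSystem

/-- the quadruple (λ, a, c, d) = (−1/√5, 3√3/√10, −√3/√10, √2) solves the
constraint system of Theorem 1.1(1) for ε = 1, α = 1, with all side conditions. -/
theorem stmt_5 (lam a c d : ℝ)
    (hlam : lam = -(1/Real.sqrt 5))
    (ha : a = 3*Real.sqrt 3/Real.sqrt 10)
    (hc : c = -(Real.sqrt 3/Real.sqrt 10))
    (hd : d = Real.sqrt 2) :
    (3*lam^2 - 1)*(3*lam^4 - 4*lam^2 + 1) + lam^4*((a + c)^2 + d^2) = 0 ∧
    (a + c)*(5*lam^2 + a^2 + c^2 - 3) + c*d^2 = 0 ∧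
    d*(5*lam^2 + d^2 + 3*c^2 + a*c - 3) = 0 ∧
    1 + lam^2 + a*c - c^2 = 0 ∧
    -1 < lam ∧ lam < 0 ∧ 0 < a ∧ a ≤ (lam^2 - 1)/lam ∧
    a ≥ d ∧ d ≥ 0 ∧ a > 2*c ∧ lam^2 ≠ 1/3 := by
  have hac : a = -3 * c := by rw [ha, hc]; ring
  have hlam_sq : lam ^ 2 = 1 / 5 := by
    rw [hlam, neg_sq, div_pow, Real.sq_sqrt (by norm_num : (0 : ℝ) ≤ 5)]; norm_num
  have hc_sq : c ^ 2 = 3 / 10 := by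
    rw [hc, neg_sq, div_pow, Real.sq_sqrt (by norm_num), Real.sq_sqrt (by norm_num)]
  have hd_sq : d ^ 2 = 2 := by rw [hd, Real.sq_sqrt zero_le_two]
  have hlam_neg : lam < 0 := by rw [hlam, neg_lt_zero]; positivity
  have hc_neg : c < 0 := by rw [hc, neg_lt_zero]; positivity
  have hd_nonneg : 0 ≤ d := hd ▸ Real.sqrt_nonneg 2
  obtain ⟨h₁, h₂, h₃, h₄⟩ := constraint_equations_of_sq hac hlam_sq hc_sq hd_sq
  exact ⟨h₁, h₂, h₃, h₄,
    side_conditions_of_sq hac hlam_neg hlam_sq hc_neg hc_sq hd_nonneg hd_sq⟩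
end

section
/- Let μ > 0 and define f : ℝ × ℝ³ → ℂ × ℂ³ = ℂ⁴ by f(x, y) = ( √(μ²/(μ²+1))·e^{−ix/μ}, √(1/(μ²+1))·e^{iμx}·y ). Then for every x ∈ ℝ and every y ∈ ℝ³ with ‖y‖ = 1: (i) ‖f(x,y)‖ = 1, so f maps into the unit sphere S⁷ ⊂ ℂ⁴; (ii) ⟨∂f/∂x, i·f⟩_ℝ = 0; and (iii) for every V ∈ ℝ³, the tangent vector (0, √(1/(μ²+1))·e^{iμx}·V) obtained by varying y satisfies ⟨(0, √(1/(μ²+1))·e^{iμx}·V), i·f(x,y)⟩_ℝ = 0. Hence the contact form of S⁷ pulls back to zero along f, i.e. f is a Legendrian immersion. -/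
open scoped ComplexInnerProductSpace

/-! Write `f(x, y) = (a, b y)` with `|a|² = μ²/(μ²+1)`, `|b|² = 1/(μ²+1)`; then
`‖f‖² = |a|² + |b|² ‖y‖² = 1`. Since `y` and `V` are real,
`⟪(c, d V), i (a, b y)⟫ = i (c̄ a + d̄ b ⟨V, y⟩)`. For the variation of `y` (`c = 0`, `d = b`)
this is `i |b|² ⟨V, y⟩`, purely imaginary. Along `x` the phases of `a` and `b` turn with speeds
`-1/μ` and `μ`, so `Re ⟪∂ₓ f, i f⟫ = -|a|²/μ + μ |b|² = 0`. -/

open Complex ComplexConjugate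

noncomputable def pairVec (a b : ℂ) (v : EuclideanSpace ℝ (Fin 3)) : EuclideanSpace ℂ (Fin 4) :=
  (WithLp.equiv 2 (Fin 4 → ℂ)).symm
    ![a, b * ((v 0 : ℝ) : ℂ), b * ((v 1 : ℝ) : ℂ), b * ((v 2 : ℝ) : ℂ)]

namespace pairVec

variable (a b c d : ℂ) (v w : EuclideanSpace ℝ (Fin 3))

theorem inner_eq :
    ⟪pairVec a b v, pairVec c d w⟫ = conj a * c + conj b * d * ((inner ℝ v w : ℝ) : ℂ) := by
  simp [pairVec, PiLp.inner_apply, Fin.sum_univ_four, Fin.sum_univ_three]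
  ring

theorem smul_eq : c • pairVec a b v = pairVec (c * a) (c * b) v := by
  ext i; fin_cases i <;> simp [pairVec, mul_assoc]

theorem eq_smul_add_smul : pairVec a b v = a • pairVec 1 0 v + b • pairVec 0 1 v := by
  ext i; fin_cases i <;> simp [pairVec]

theorem norm_sq : ‖pairVec a b v‖ ^ 2 = ‖a‖ ^ 2 + ‖b‖ ^ 2 * ‖v‖ ^ 2 := by
  have h := congrArg re (inner_eq a b a b v v)
  rw [inner_self_eq_norm_sq_to_K, real_inner_self_eq_norm_sq, conj_mul', conj_mul'] at h
  exact_mod_cast h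

theorem re_inner_mul_I_smul (w z : ℂ) :
    (⟪pairVec (a * w) (b * z) v, I • pairVec a b v⟫).re =
      w.im * ‖a‖ ^ 2 + z.im * ‖b‖ ^ 2 * ‖v‖ ^ 2 := by
  rw [smul_eq, inner_eq, real_inner_self_eq_norm_sq, map_mul, map_mul]
  calc _ = (I * conj w * (conj a * a) + I * conj z * (conj b * b) * (‖v‖ ^ 2 : ℝ)).re := by
        ring_nf
    _ = _ := by
      rw [conj_mul', conj_mul', ← ofReal_pow, ← ofReal_pow]
      simp only [add_re, mul_re, mul_im, I_re, I_im, conj_re, conj_im, ofReal_re, ofReal_im]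
      ring

theorem re_inner_zero_I_smul :
    (⟪pairVec 0 b w, I • pairVec a b v⟫).re = 0 := by
  rw [smul_eq, inner_eq, map_zero, zero_mul, zero_add, mul_left_comm, conj_mul', ← ofReal_pow]
  simp only [mul_re, I_re, I_im, ofReal_re, ofReal_im]
  ring

end pairVec

theorem hasDerivAt_pairVec {a b : ℝ → ℂ} {a' b' : ℂ} {t : ℝ} (v : EuclideanSpace ℝ (Fin 3))
    (ha : HasDerivAt a a' t) (hb : HasDerivAt b b' t) :
    HasDerivAt (fun t => pairVec (a t) (b t) v) (pairVec a' b' v) t := by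
  rw [pairVec.eq_smul_add_smul]
  simp_rw [pairVec.eq_smul_add_smul (a _)]
  exact (ha.smul_const _).add (hb.smul_const _)

theorem hasDerivAt_const_mul_cexp_mul_ofReal (c w : ℂ) {θ : ℝ → ℝ} {θ' t : ℝ}
    (hθ : HasDerivAt θ θ' t) :
    HasDerivAt (fun t => c * exp (w * θ t)) (c * exp (w * θ t) * (w * θ')) t := by
  simpa [mul_assoc] using ((hθ.ofReal_comp.const_mul w).cexp).const_mul c

theorem norm_ofReal_sqrt_mul_cexp_of_re_eq_zero (s θ : ℝ) (w : ℂ) (hw : w.re = 0) :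
    ‖((√s : ℝ) : ℂ) * exp (w * θ)‖ = √s := by
  simp [norm_exp, hw]

theorem sq_sqrt_div_add_sq_sqrt_one_div (μ : ℝ) :
    √(μ ^ 2 / (μ ^ 2 + 1)) ^ 2 + √(1 / (μ ^ 2 + 1)) ^ 2 = 1 := by
  rw [Real.sq_sqrt (by positivity), Real.sq_sqrt (by positivity), ← add_div,
    div_self (by positivity)]

theorem neg_inv_mul_sq_sqrt_div_add_mul_sq_sqrt_one_div (μ : ℝ) :
    -μ⁻¹ * √(μ ^ 2 / (μ ^ 2 + 1)) ^ 2 + μ * √(1 / (μ ^ 2 + 1)) ^ 2 = 0 := by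
  rw [Real.sq_sqrt (by positivity), Real.sq_sqrt (by positivity)]
  rcases eq_or_ne μ 0 with rfl | hμ
  · simp
  · field_simp
    ring

theorem stmt_6_general (μ : ℝ)
    (f : ℝ → EuclideanSpace ℝ (Fin 3) → EuclideanSpace ℂ (Fin 4))
    (hf : ∀ (x : ℝ) (y : EuclideanSpace ℝ (Fin 3)),
      f x y = (WithLp.equiv 2 (Fin 4 → ℂ)).symm
        ![((Real.sqrt (μ^2/(μ^2 + 1)) : ℝ) : ℂ) * Complex.exp (-Complex.I * ((x/μ : ℝ) : ℂ)),
          ((Real.sqrt (1/(μ^2 + 1)) : ℝ) : ℂ) * Complex.exp (Complex.I * ((μ*x : ℝ) : ℂ)) * ((y 0 : ℝ) : ℂ),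
          ((Real.sqrt (1/(μ^2 + 1)) : ℝ) : ℂ) * Complex.exp (Complex.I * ((μ*x : ℝ) : ℂ)) * ((y 1 : ℝ) : ℂ),
          ((Real.sqrt (1/(μ^2 + 1)) : ℝ) : ℂ) * Complex.exp (Complex.I * ((μ*x : ℝ) : ℂ)) * ((y 2 : ℝ) : ℂ)]) :
    ∀ (x : ℝ) (y : EuclideanSpace ℝ (Fin 3)), ‖y‖ = 1 →
      ‖f x y‖ = 1 ∧
      (⟪deriv (fun t => f t y) x, Complex.I • f x y⟫).re = 0 ∧
      ∀ V : EuclideanSpace ℝ (Fin 3),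
        (⟪((WithLp.equiv 2 (Fin 4 → ℂ)).symm
            ![(0 : ℂ),
              ((Real.sqrt (1/(μ^2 + 1)) : ℝ) : ℂ) * Complex.exp (Complex.I * ((μ*x : ℝ) : ℂ)) * ((V 0 : ℝ) : ℂ),
              ((Real.sqrt (1/(μ^2 + 1)) : ℝ) : ℂ) * Complex.exp (Complex.I * ((μ*x : ℝ) : ℂ)) * ((V 1 : ℝ) : ℂ),
              ((Real.sqrt (1/(μ^2 + 1)) : ℝ) : ℂ) * Complex.exp (Complex.I * ((μ*x : ℝ) : ℂ)) * ((V 2 : ℝ) : ℂ)]),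
          Complex.I • f x y⟫).re = 0 := by
  intro x y hy
  have hfy (t : ℝ) : f t y = pairVec (√(μ ^ 2 / (μ ^ 2 + 1)) * exp (-I * ↑(t / μ)))
      (√(1 / (μ ^ 2 + 1)) * exp (I * ↑(μ * t))) y := hf t y
  have hnorm₁ :=
    norm_ofReal_sqrt_mul_cexp_of_re_eq_zero (μ ^ 2 / (μ ^ 2 + 1)) (x / μ) (-I) (by simp)
  have hnorm₂ := norm_ofReal_sqrt_mul_cexp_of_re_eq_zero (1 / (μ ^ 2 + 1)) (μ * x) I (by simp)
  have hderiv := hasDerivAt_pairVec y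
    (hasDerivAt_const_mul_cexp_mul_ofReal (√(μ ^ 2 / (μ ^ 2 + 1)) : ℂ) (-I)
      ((hasDerivAt_id' x).div_const μ))
    (hasDerivAt_const_mul_cexp_mul_ofReal (√(1 / (μ ^ 2 + 1)) : ℂ) I
      ((hasDerivAt_id' x).const_mul μ))
  refine ⟨?_, ?_, fun V => ?_⟩
  · rw [← pow_eq_one_iff_of_nonneg (norm_nonneg _) two_ne_zero, hfy, pairVec.norm_sq, hnorm₁,
      hnorm₂, hy, one_pow, mul_one, sq_sqrt_div_add_sq_sqrt_one_div]
  · rw [show (fun t => f t y) = _ from funext hfy, hderiv.deriv, hfy,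
      pairVec.re_inner_mul_I_smul, hnorm₁, hnorm₂, hy]
    simpa using neg_inv_mul_sq_sqrt_div_add_mul_sq_sqrt_one_div μ
  · rw [hfy]
    exact pairVec.re_inner_zero_I_smul _ _ y V

/-- the non-flat immersion f(x,y) = (√(μ²/(μ²+1))e^{−ix/μ}, √(1/(μ²+1))e^{iμx}y)
maps into S⁷ and is Legendrian. -/
theorem stmt_6 (μ : ℝ) (hμ : 0 < μ)
    (f : ℝ → EuclideanSpace ℝ (Fin 3) → EuclideanSpace ℂ (Fin 4))
    (hf : ∀ (x : ℝ) (y : EuclideanSpace ℝ (Fin 3)),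
      f x y = (WithLp.equiv 2 (Fin 4 → ℂ)).symm
        ![((Real.sqrt (μ^2/(μ^2 + 1)) : ℝ) : ℂ) * Complex.exp (-Complex.I * ((x/μ : ℝ) : ℂ)),
          ((Real.sqrt (1/(μ^2 + 1)) : ℝ) : ℂ) * Complex.exp (Complex.I * ((μ*x : ℝ) : ℂ)) * ((y 0 : ℝ) : ℂ),
          ((Real.sqrt (1/(μ^2 + 1)) : ℝ) : ℂ) * Complex.exp (Complex.I * ((μ*x : ℝ) : ℂ)) * ((y 1 : ℝ) : ℂ),
          ((Real.sqrt (1/(μ^2 + 1)) : ℝ) : ℂ) * Complex.exp (Complex.I * ((μ*x : ℝ) : ℂ)) * ((y 2 : ℝ) : ℂ)]) :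
    ∀ (x : ℝ) (y : EuclideanSpace ℝ (Fin 3)), ‖y‖ = 1 →
      ‖f x y‖ = 1 ∧
      (⟪deriv (fun t => f t y) x, Complex.I • f x y⟫).re = 0 ∧
      ∀ V : EuclideanSpace ℝ (Fin 3),
        (⟪((WithLp.equiv 2 (Fin 4 → ℂ)).symm
            ![(0 : ℂ),
              ((Real.sqrt (1/(μ^2 + 1)) : ℝ) : ℂ) * Complex.exp (Complex.I * ((μ*x : ℝ) : ℂ)) * ((V 0 : ℝ) : ℂ),
              ((Real.sqrt (1/(μ^2 + 1)) : ℝ) : ℂ) * Complex.exp (Complex.I * ((μ*x : ℝ) : ℂ)) * ((V 1 : ℝ) : ℂ),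
              ((Real.sqrt (1/(μ^2 + 1)) : ℝ) : ℂ) * Complex.exp (Complex.I * ((μ*x : ℝ) : ℂ)) * ((V 2 : ℝ) : ℂ)]),
          Complex.I • f x y⟫).re = 0 :=
  stmt_6_general μ f hf
end

section
/- Let μ > 0 and define z : ℝ → ℂ² by z(x) = ( √(μ²/(μ²+1))·e^{−ix/μ}, √(1/(μ²+1))·e^{iμx} ). Then for every x ∈ ℝ: ‖z(x)‖ = 1, ⟨z′(x), i·z(x)⟩_ℝ = 0, and ‖z′(x)‖ = 1. That is, z is a unit-speed Legendre curve in the unit sphere S³ ⊂ ℂ². -/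
/-!
Each coordinate of `z` rotates uniformly, `z k t = c k * exp (i ω k t)` with
`c = (√(μ²/(μ²+1)), √(1/(μ²+1)))` and `ω = (-1/μ, μ)`. For such a curve
`‖z‖² = ∑ |c k|²`, `‖z'‖² = ∑ ω k² |c k|²` and `Re ⟪z', i z⟫ = ∑ ω k |c k|²`, so the three
claims reduce to `a² + b² = 1`, `-a²/μ + b² μ = 0` and `a²/μ² + b² μ² = 1` for `a = |c 0|`, `b = |c 1|`.
-/

open scoped ComplexInnerProductSpace

open Complex ComplexConjugate

section RotationCurve

variable {ι : Type*} [Fintype ι]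

noncomputable def rotationCurve (c : ι → ℂ) (ω : ι → ℝ) (t : ℝ) : EuclideanSpace ℂ ι :=
  WithLp.toLp 2 fun k => c k * exp ((ω k * t : ℝ) * I)

theorem hasDerivAt_rotationCurve (c : ι → ℂ) (ω : ι → ℝ) (t : ℝ) :
    HasDerivAt (rotationCurve c ω) (rotationCurve (fun k => ω k * I * c k) ω t) t := by
  have hcoord : HasDerivAt (fun s => fun k => c k * exp ((ω k * s : ℝ) * I))
      (fun k => ω k * I * c k * exp ((ω k * t : ℝ) * I)) t := by
    refine hasDerivAt_pi.2 fun k => ?_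
    have harg : HasDerivAt (fun s : ℝ => ((ω k * s : ℝ) : ℂ) * I) (ω k * I) t := by
      simpa using ((hasDerivAt_id (t : ℂ)).comp_ofReal.const_mul (ω k : ℂ)).mul_const I
    exact (harg.cexp.const_mul (c k)).congr_deriv (by ring)
  exact (PiLp.continuousLinearEquiv 2 ℝ fun _ : ι => ℂ).symm.hasFDerivAt.comp_hasDerivAt t hcoord

theorem norm_rotationCurve (c : ι → ℂ) (ω : ι → ℝ) (t : ℝ) :
    ‖rotationCurve c ω t‖ = √(∑ k, ‖c k‖ ^ 2) := by
  simp only [rotationCurve, EuclideanSpace.norm_eq, norm_mul, norm_exp_ofReal_mul_I, mul_one]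

theorem re_inner_deriv_I_smul_rotationCurve (c : ι → ℂ) (ω : ι → ℝ) (t : ℝ) :
    (⟪rotationCurve (fun k => ω k * I * c k) ω t, I • rotationCurve c ω t⟫).re
      = ∑ k, ω k * ‖c k‖ ^ 2 := by
  simp only [rotationCurve, PiLp.inner_apply, PiLp.smul_apply, RCLike.inner_apply, smul_eq_mul,
    re_sum]
  refine Finset.sum_congr rfl fun k _ => ?_
  have hnorm : ‖c k * exp ((ω k * t : ℝ) * I)‖ = ‖c k‖ := by
    rw [norm_mul, norm_exp_ofReal_mul_I, mul_one]
  rw [← hnorm, mul_assoc _ (c k)]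
  generalize c k * exp ((ω k * t : ℝ) * I) = e
  have hrot : I * e * conj (ω k * I * e) = ω k * (e * conj e) := by
    simp only [map_mul, conj_ofReal, conj_I]
    linear_combination (-(ω k : ℂ) * e * conj e) * I_sq
  rw [hrot, mul_conj, ← ofReal_mul, ofReal_re, normSq_eq_norm_sq]

theorem norm_rotationCurve_deriv (c : ι → ℂ) (ω : ι → ℝ) (t : ℝ) :
    ‖rotationCurve (fun k => ω k * I * c k) ω t‖ = √(∑ k, ω k ^ 2 * ‖c k‖ ^ 2) := by
  simp only [norm_rotationCurve, norm_mul, norm_I, norm_real, Real.norm_eq_abs, mul_one, mul_pow,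
    sq_abs]

end RotationCurve

/-- z is a unit-speed Legendre curve in S³ ⊂ ℂ². -/
theorem stmt_7 (μ : ℝ) (hμ : 0 < μ)
    (z : ℝ → EuclideanSpace ℂ (Fin 2))
    (hz : ∀ x : ℝ, z x = (WithLp.equiv 2 (Fin 2 → ℂ)).symm
      ![((Real.sqrt (μ^2/(μ^2 + 1)) : ℝ) : ℂ) * Complex.exp (-Complex.I * ((x/μ : ℝ) : ℂ)),
        ((Real.sqrt (1/(μ^2 + 1)) : ℝ) : ℂ) * Complex.exp (Complex.I * ((μ*x : ℝ) : ℂ))]) :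
    ∀ x : ℝ, ‖z x‖ = 1 ∧ (⟪deriv z x, Complex.I • z x⟫).re = 0 ∧ ‖deriv z x‖ = 1 := by
  have hz' : z = rotationCurve ![(√(μ^2/(μ^2 + 1)) : ℂ), (√(1/(μ^2 + 1)) : ℂ)] ![-μ⁻¹, μ] := by
    funext t
    rw [hz]
    ext k
    fin_cases k <;>
      simp only [rotationCurve, WithLp.equiv_symm_apply, PiLp.toLp_apply, Fin.zero_eta, Fin.mk_one,
        Matrix.cons_val_zero, Matrix.cons_val_one] <;> congr 2 <;> push_cast <;> ring
  intro x
  have norm_sq_sqrt (r : ℝ) (hr : 0 ≤ r) : ‖((√r : ℝ) : ℂ)‖ ^ 2 = r := by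
    rw [norm_real, Real.norm_eq_abs, sq_abs, Real.sq_sqrt hr]
  rw [hz', (hasDerivAt_rotationCurve _ _ x).deriv, norm_rotationCurve,
    re_inner_deriv_I_smul_rotationCurve, norm_rotationCurve_deriv]
  simp only [Fin.sum_univ_two, Matrix.cons_val_zero, Matrix.cons_val_one, Matrix.cons_val_fin_one]
  rw [norm_sq_sqrt _ (by positivity), norm_sq_sqrt _ (by positivity)]
  have hμ0 : μ ≠ 0 := hμ.ne'
  refine ⟨?_, ?_, ?_⟩
  · rw [Real.sqrt_eq_one]
    field_simp
  · field_simp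
    ring
  · rw [Real.sqrt_eq_one]
    field_simp
    ring
end

section
/- Let μ > 0 and define z : ℝ → ℂ² by z(x) = ( √(μ²/(μ²+1))·e^{−ix/μ}, √(1/(μ²+1))·e^{iμx} ). Then z″(x) = −z(x) for all x ∈ ℝ if and only if μ = 1. (Since z is a unit-speed curve in the unit sphere, this is exactly the condition that z is a great-circle geodesic.) -/
/-!
Each coordinate of `z` is `u j * exp (c j * x)` with `c = (-i/μ, iμ)`, so differentiating twice
multiplies it by `c j ^ 2`. Hence `z'' = -z` exactly when `c j ^ 2 = -1` for every coordinate
with `u j ≠ 0`. The second amplitude never vanishes and `(iμ)² = -μ²`, so this forces `μ² = 1`,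
while for `μ = 1` both `c j ^ 2` equal `-1`.
-/

open Complex

section ExpCurve

variable {ι : Type*}

noncomputable def expCurve (u c : ι → ℂ) (x : ℝ) : EuclideanSpace ℂ ι :=
  WithLp.toLp 2 fun i => u i * exp (c i * x)

theorem hasDerivAt_mul_cexp_const_mul (u c : ℂ) (x : ℝ) :
    HasDerivAt (fun y : ℝ => u * exp (c * y)) (u * c * exp (c * x)) x := by
  have h : HasDerivAt (fun y : ℂ => u * exp (c * y)) (u * (exp (c * x) * c)) x :=
    (((hasDerivAt_id (x : ℂ)).const_mul c).cexp.const_mul u).congr_deriv (by simp)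
  simpa [mul_comm, mul_left_comm, mul_assoc] using h.comp_ofReal

theorem hasDerivAt_expCurve [Fintype ι] (u c : ι → ℂ) (x : ℝ) :
    HasDerivAt (expCurve u c) (expCurve (u * c) c x) x :=
  show HasDerivAt (fun y : ℝ => WithLp.toLp 2 fun i => u i * exp (c i * y)) _ x from
  (PiLp.hasFDerivAt_toLp (𝕜 := ℝ) 2 _).comp_hasDerivAt x <|
    hasDerivAt_pi.2 fun i => hasDerivAt_mul_cexp_const_mul (u i) (c i) x

theorem deriv_expCurve [Fintype ι] (u c : ι → ℂ) : deriv (expCurve u c) = expCurve (u * c) c :=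
  funext fun x => (hasDerivAt_expCurve u c x).deriv

theorem expCurve_zero (u c : ι → ℂ) : expCurve u c 0 = WithLp.toLp 2 u := by
  simp [expCurve]

theorem expCurve_neg (u c : ι → ℂ) (x : ℝ) : expCurve (-u) c x = -expCurve u c x := by
  ext i; simp [expCurve]

theorem deriv_deriv_expCurve_eq_neg_iff [Fintype ι] (u c : ι → ℂ) :
    (∀ x, deriv (deriv (expCurve u c)) x = -expCurve u c x) ↔ ∀ i, u i = 0 ∨ c i ^ 2 = -1 := by
  simp_rw [deriv_expCurve, ← expCurve_neg]
  constructor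
  · intro h i
    have hi := congrArg (· i) (h 0)
    simp only [expCurve_zero, PiLp.toLp_apply, Pi.mul_apply, Pi.neg_apply] at hi
    have : u i * (c i ^ 2 + 1) = 0 := by linear_combination hi
    simpa [add_eq_zero_iff_eq_neg] using this
  · intro h x
    ext i
    rcases h i with hu | hc
    · simp [expCurve, hu]
    · simp only [expCurve, PiLp.toLp_apply, Pi.mul_apply, Pi.neg_apply]
      linear_combination u i * exp (c i * x) * hc

end ExpCurve

/-- z″ = −z holds identically if and only if μ = 1, i.e. z is a geodesic
of the unit sphere exactly when μ² = 1. -/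
theorem stmt_8 (μ : ℝ) (hμ : 0 < μ)
    (z : ℝ → EuclideanSpace ℂ (Fin 2))
    (hz : ∀ x : ℝ, z x = (WithLp.equiv 2 (Fin 2 → ℂ)).symm
      ![((Real.sqrt (μ^2/(μ^2 + 1)) : ℝ) : ℂ) * Complex.exp (-Complex.I * ((x/μ : ℝ) : ℂ)),
        ((Real.sqrt (1/(μ^2 + 1)) : ℝ) : ℂ) * Complex.exp (Complex.I * ((μ*x : ℝ) : ℂ))]) :
    (∀ x : ℝ, deriv (deriv z) x = -(z x)) ↔ μ = 1 := by
  have hz_eq : z = expCurve ![(√(μ ^ 2 / (μ ^ 2 + 1)) : ℂ), (√(1 / (μ ^ 2 + 1)) : ℂ)]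
      ![-I / μ, I * μ] := by
    funext x
    rw [hz, WithLp.equiv_symm_apply, expCurve]
    congr 1
    ext i
    fin_cases i <;> simp only [Fin.zero_eta, Fin.mk_one, Matrix.cons_val_zero, Matrix.cons_val_one,
      Matrix.cons_val_fin_one] <;> push_cast <;> ring_nf
  rw [hz_eq, deriv_deriv_expCurve_eq_neg_iff, Fin.forall_fin_two]
  simp only [Matrix.cons_val_zero, Matrix.cons_val_one]
  constructor
  · rintro ⟨-, hb | hμ_sq⟩
    · exact absurd (ofReal_eq_zero.1 hb) (Real.sqrt_pos.2 (by positivity)).ne'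
    · have : (μ : ℂ) ^ 2 = 1 := by linear_combination -hμ_sq + (μ : ℂ) ^ 2 * I_sq
      exact (pow_eq_one_iff_of_nonneg hμ.le two_ne_zero).1 (by exact_mod_cast this)
  · rintro rfl
    norm_num
end

section
/- Let λ ≠ 0 be a real number and define z : ℝ → ℂ² by z(u) = ( (λ/√(λ²+1))·e^{iu/λ}, (1/√(λ²+1))·e^{−iλu} ). Then for every u ∈ ℝ: ‖z(u)‖ = 1 and ⟨z′(u), i·z(u)⟩_ℝ = 0, i.e. z is a Legendre curve in the unit sphere S³ ⊂ ℂ². -/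
open scoped ComplexInnerProductSpace

/-!
Each coordinate of `z` rotates at constant angular speed, `z_k(u) = c_k e^{i ω_k u}`, so
`z' = (i ω_k z_k)_k` and `⟨z', i z⟩_ℝ = ∑ ω_k |c_k|²`, while `‖z‖² = ∑ |c_k|²`. Here
`c = (λ, 1)/√(λ²+1)` and `ω = (1/λ, -λ)`, so both sums reduce to `(λ² + 1)/(λ² + 1) = 1` and
`(λ - λ)/(λ² + 1) = 0`.
-/

open Complex ComplexConjugate

noncomputable section

variable {ι : Type*} [Fintype ι]

def torusCurve (c : ι → ℂ) (ω : ι → ℝ) (u : ℝ) : EuclideanSpace ℂ ι :=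
  WithLp.toLp 2 fun k => c k * exp (I * ((ω k * u : ℝ) : ℂ))

theorem hasDerivAt_torusCurve (c : ι → ℂ) (ω : ι → ℝ) (u : ℝ) :
    HasDerivAt (torusCurve c ω) (torusCurve (fun k => I * ω k * c k) ω u) u := by
  have hcoord : ∀ k, HasDerivAt (fun u : ℝ => c k * exp (I * ((ω k * u : ℝ) : ℂ)))
      (I * ω k * c k * exp (I * ((ω k * u : ℝ) : ℂ))) u := fun k => by
    refine ((((hasDerivAt_id u).const_mul (ω k)).ofReal_comp.const_mul I).cexp).const_mul (c k)
      |>.congr_deriv ?_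
    simp only [id, mul_one]
    ring
  exact (PiLp.hasFDerivAt_toLp 2 _).comp_hasDerivAt u (hasDerivAt_pi.2 hcoord)

theorem norm_torusCurve (c : ι → ℂ) (ω : ι → ℝ) (u : ℝ) :
    ‖torusCurve c ω u‖ = ‖(WithLp.toLp 2 c : EuclideanSpace ℂ ι)‖ := by
  simp only [torusCurve, EuclideanSpace.norm_eq, norm_mul, norm_exp_I_mul_ofReal, mul_one]

theorem re_inner_deriv_I_smul_torusCurve (c : ι → ℂ) (ω : ι → ℝ) (u : ℝ) :
    (⟪deriv (torusCurve c ω) u, I • torusCurve c ω u⟫).re = ∑ k, ω k * ‖c k‖ ^ 2 := by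
  rw [(hasDerivAt_torusCurve c ω u).deriv]
  simp only [torusCurve, PiLp.inner_apply, PiLp.smul_apply, RCLike.inner_apply, re_sum]
  refine Finset.sum_congr rfl fun k _ => ?_
  set e := exp (I * ((ω k * u : ℝ) : ℂ))
  have hI : I • (c k * e) * conj (I * ω k * c k * e)
      = ω k * (c k * conj (c k)) * (e * conj e) := by
    simp only [smul_eq_mul, map_mul, conj_I, conj_ofReal]
    linear_combination (-(ω k : ℂ) * (c k * conj (c k)) * (e * conj e)) * I_sq
  rw [hI, mul_conj', mul_conj', norm_exp_I_mul_ofReal]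
  norm_cast
  ring

end

theorem stmt_13_general (lam : ℝ)
    (z : ℝ → EuclideanSpace ℂ (Fin 2))
    (hz : ∀ u : ℝ, z u = (WithLp.equiv 2 (Fin 2 → ℂ)).symm
      ![((lam/Real.sqrt (lam^2 + 1) : ℝ) : ℂ) * Complex.exp (Complex.I * ((u/lam : ℝ) : ℂ)),
        ((1/Real.sqrt (lam^2 + 1) : ℝ) : ℂ) * Complex.exp (-Complex.I * ((lam*u : ℝ) : ℂ))]) :
    ∀ u : ℝ, ‖z u‖ = 1 ∧ (⟪deriv z u, Complex.I • z u⟫).re = 0 := by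
  have hz' : z = torusCurve ![((lam / √(lam ^ 2 + 1) : ℝ) : ℂ), ((1 / √(lam ^ 2 + 1) : ℝ) : ℂ)]
      ![lam⁻¹, -lam] := by
    funext u
    rw [hz u]
    ext k
    fin_cases k
    · simp [torusCurve, div_eq_inv_mul]
    · simp [torusCurve]
  have hs : √(lam ^ 2 + 1) ^ 2 = lam ^ 2 + 1 := Real.sq_sqrt (by positivity)
  intro u
  refine ⟨?_, ?_⟩
  · rw [hz', norm_torusCurve, EuclideanSpace.norm_eq, Real.sqrt_eq_one]
    simp only [Fin.sum_univ_two, Matrix.cons_val_zero, Matrix.cons_val_one, Matrix.cons_val_fin_one,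
      norm_real, Real.norm_eq_abs, sq_abs, div_pow, hs]
    field_simp
  · rw [hz', re_inner_deriv_I_smul_torusCurve]
    simp only [Fin.sum_univ_two, Matrix.cons_val_zero, Matrix.cons_val_one, Matrix.cons_val_fin_one,
      norm_real, Real.norm_eq_abs, sq_abs, div_pow, hs]
    field_simp
    ring

/-- z(u) = ((λ/√(λ²+1))e^{iu/λ}, (1/√(λ²+1))e^{−iλu}) is a Legendre curve
in S³ ⊂ ℂ². -/
theorem stmt_13 (lam : ℝ) (hlam : lam ≠ 0)
    (z : ℝ → EuclideanSpace ℂ (Fin 2))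
    (hz : ∀ u : ℝ, z u = (WithLp.equiv 2 (Fin 2 → ℂ)).symm
      ![((lam/Real.sqrt (lam^2 + 1) : ℝ) : ℂ) * Complex.exp (Complex.I * ((u/lam : ℝ) : ℂ)),
        ((1/Real.sqrt (lam^2 + 1) : ℝ) : ℂ) * Complex.exp (-Complex.I * ((lam*u : ℝ) : ℂ))]) :
    ∀ u : ℝ, ‖z u‖ = 1 ∧ (⟪deriv z u, Complex.I • z u⟫).re = 0 :=
  stmt_13_general lam z hz
end

section
/- The quadruple of real numbers λ = −√((4−√13)/3), a = √((7−√13)/6), c = −√((7−√13)/6), d = 0 satisfies 1 + λ² + a·c − c² = 0 together with the side conditions −1 < λ < 0, 0 < a ≤ (λ²−1)/λ, a ≥ d ≥ 0, a > 2c, and λ² ≠ 1/3. -/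
/-- admissible parameter quadruple of Theorem 4.2(1). -/
theorem stmt_14 (lam a c d : ℝ)
    (hlam : lam = -Real.sqrt ((4 - Real.sqrt 13)/3))
    (ha : a = Real.sqrt ((7 - Real.sqrt 13)/6))
    (hc : c = -Real.sqrt ((7 - Real.sqrt 13)/6))
    (hd : d = (0 : ℝ)) :
    1 + lam^2 + a*c - c^2 = 0 ∧
    -1 < lam ∧ lam < 0 ∧ 0 < a ∧ a ≤ (lam^2 - 1)/lam ∧
    a ≥ d ∧ d ≥ 0 ∧ a > 2*c ∧ lam^2 ≠ 1/3 := by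
  set s := Real.sqrt 13 with hs
  have hs2 : s^2 = 13 := Real.sq_sqrt (by norm_num)
  have hs3 : 3 < s := by nlinarith [Real.sqrt_nonneg 13]
  have hs4 : s < 4 := by nlinarith [Real.sqrt_nonneg 13]
  have htpos : (0:ℝ) < (4 - s)/3 := by linarith
  have hupos : (0:ℝ) < (7 - s)/6 := by linarith
  set L := Real.sqrt ((4 - s)/3) with hL
  set A := Real.sqrt ((7 - s)/6) with hA
  have hL2 : L^2 = (4 - s)/3 := Real.sq_sqrt htpos.le
  have hA2 : A^2 = (7 - s)/6 := Real.sq_sqrt hupos.le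
  have hLpos : 0 < L := Real.sqrt_pos.mpr htpos
  have hApos : 0 < A := Real.sqrt_pos.mpr hupos
  have hL1 : L < 1 := by nlinarith
  refine ⟨by rw [hlam, ha, hc]; nlinarith, by rw [hlam]; linarith, by rw [hlam]; linarith,
    by rw [ha]; exact hApos, ?_, by rw [ha, hd]; exact hApos.le, by rw [hd],
    by rw [ha, hc]; nlinarith, ?_⟩
  · rw [hlam, ha, le_div_iff_of_neg (by linarith : -L < 0)]
    nlinarith [mul_pos hApos hLpos, sq_nonneg (A*L - (1 - L^2))]
  · rw [hlam]
    intro h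
    have : (-L)^2 = (4-s)/3 := by rw [neg_pow]; simp [hL2]
    rw [h] at this
    nlinarith
end

section
/- The quadruple of real numbers λ = −√(1/(6+√13)), a = √((523+139√13)/138), c = −√((79−17√13)/138), d = √((14+2√13)/3) satisfies 1 + λ² + a·c − c² = 0 together with the side conditions −1 < λ < 0, 0 < a ≤ (λ²−1)/λ, a ≥ d ≥ 0, a > 2c, and λ² ≠ 1/3. -/
/-- admissible parameter quadruple of Theorem 4.2(1). -/
theorem stmt_16 (lam a c d : ℝ)
    (hlam : lam = -Real.sqrt (1/(6 + Real.sqrt 13)))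
    (ha : a = Real.sqrt ((523 + 139*Real.sqrt 13)/138))
    (hc : c = -Real.sqrt ((79 - 17*Real.sqrt 13)/138))
    (hd : d = Real.sqrt ((14 + 2*Real.sqrt 13)/3)) :
    1 + lam^2 + a*c - c^2 = 0 ∧
    -1 < lam ∧ lam < 0 ∧ 0 < a ∧ a ≤ (lam^2 - 1)/lam ∧
    a ≥ d ∧ d ≥ 0 ∧ a > 2*c ∧ lam^2 ≠ 1/3 := by
  set s := Real.sqrt 13 with hsdef
  have hs2 : s^2 = 13 := Real.sq_sqrt (by norm_num)
  have hs0 : 0 ≤ s := Real.sqrt_nonneg 13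
  clear_value s
  have hs3 : 3 < s := by nlinarith
  have hs4 : s < 4 := by nlinarith
  have h6s : (0:ℝ) < 6 + s := by linarith
  have h23 : 1/(6+s) = (6-s)/23 := by
    rw [div_eq_div_iff h6s.ne' (by norm_num)]
    linear_combination hs2
  have hL : (0:ℝ) ≤ 1/(6+s) := by positivity
  have hA : (0:ℝ) ≤ (523 + 139*s)/138 := by positivity
  have hApos : (0:ℝ) < (523 + 139*s)/138 := by positivity
  have hC : (0:ℝ) ≤ (79 - 17*s)/138 := by linarith
  have hCpos : (0:ℝ) < (79 - 17*s)/138 := by linarith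
  have hD : (0:ℝ) ≤ (14 + 2*s)/3 := by positivity
  have hlam2 : lam^2 = 1/(6+s) := by
    rw [hlam, neg_pow, pow_succ, pow_one, neg_one_mul, neg_neg, Real.sq_sqrt hL, one_mul]
  have ha2 : a^2 = (523 + 139*s)/138 := by rw [ha, Real.sq_sqrt hA]
  have hc2 : c^2 = (79 - 17*s)/138 := by
    rw [hc, neg_pow, pow_succ, pow_one, neg_one_mul, neg_neg, Real.sq_sqrt hC, one_mul]
  have hd2 : d^2 = (14 + 2*s)/3 := by rw [hd, Real.sq_sqrt hD]
  have hapos : 0 < a := by rw [ha]; exact Real.sqrt_pos.mpr hApos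
  have hcneg : c < 0 := by
    rw [hc]; simp only [neg_neg, neg_lt_zero]; exact Real.sqrt_pos.mpr hCpos
  have hlamneg : lam < 0 := by
    rw [hlam]; simp only [neg_lt_zero]; exact Real.sqrt_pos.mpr (by positivity)
  have hac : a * c = -((95 + 11*s)/138) := by
    rw [ha, hc, mul_neg, ← Real.sqrt_mul hA,
      show (523 + 139*s)/138 * ((79 - 17*s)/138) = ((95 + 11*s)/138)^2 from by
        linear_combination (-(69:ℝ)/529) * hs2,
      Real.sqrt_sq (by positivity)]
  refine ⟨?_, ?_, hlamneg, hapos, ?_, ?_, ?_, ?_, ?_⟩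
  · rw [hlam2, h23, hac, hc2]; ring
  · rw [hlam]
    have h1 : Real.sqrt (1/(6+s)) < 1 := by
      have := Real.sqrt_lt_sqrt hL (show 1/(6+s) < 1 by rw [div_lt_one h6s]; linarith)
      rwa [Real.sqrt_one] at this
    linarith
  · rw [le_div_iff_of_neg hlamneg]
    have halam : a * lam = -Real.sqrt ((1331 + 311*s)/3174) := by
      rw [ha, hlam, mul_neg, ← Real.sqrt_mul hA, h23,
        show (523 + 139*s)/138 * ((6-s)/23) = (1331 + 311*s)/3174 from by
          linear_combination (-(139:ℝ)/3174) * hs2]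
    have h1 : Real.sqrt ((1331 + 311*s)/3174) ≤ (17+s)/23 := by
      have := Real.sqrt_le_sqrt (show (1331 + 311*s)/3174 ≤ ((17+s)/23)^2 by nlinarith)
      rwa [Real.sqrt_sq (by positivity)] at this
    rw [halam, hlam2, h23]
    have : (6-s)/23 - 1 = -((17+s)/23) := by ring
    rw [this]
    linarith
  · rw [ha, hd]
    exact Real.sqrt_le_sqrt (by nlinarith)
  · rw [hd]; exact Real.sqrt_nonneg _
  · nlinarith
  · rw [hlam2, h23]
    intro h
    rw [div_eq_div_iff (by norm_num) (by norm_num)] at h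
    linarith
end

section
/- Define f : ℝ × ℝ³ → ℂ × ℂ³ = ℂ⁴ by f(x, y) = (1/√2)·(e^{ix}, e^{−ix}·y). Then for every x ∈ ℝ and every y ∈ ℝ³ with ‖y‖ = 1: (i) ‖f(x,y)‖ = 1, so f maps into the unit sphere S⁷ ⊂ ℂ⁴; (ii) ⟨∂f/∂x, i·f⟩_ℝ = 0; and (iii) for every V ∈ ℝ³, the tangent vector (0, (1/√2)·e^{−ix}·V) obtained by varying y satisfies ⟨(0, (1/√2)·e^{−ix}·V), i·f(x,y)⟩_ℝ = 0. Hence f is a Legendrian immersion into S⁷. -/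
/-!
Write a point of `ℂ⁴ = ℂ × ℂ³` as `(a, b • y)` with `a b : ℂ` and `y` real. The Hermitian product of
two such points is `conj a * a' + conj b * b' * ⟪y, y'⟫_ℝ`. For `f(x, y)` we have
`‖a‖² = ‖b‖² = 1/2`, and `∂f/∂x = (I a, -I b • y)`, so `⟪∂f/∂x, I • f⟫ = ‖a‖² - ‖b‖² ‖y‖²`, which
vanishes on `‖y‖ = 1`. Varying `y` by `V` gives `⟪(0, b • V), I • f⟫ = I ‖b‖² ⟪V, y⟫_ℝ`, which is
purely imaginary because `y` and `V` are real.
-/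

open scoped ComplexInnerProductSpace

open Complex

namespace EuclideanSpace

variable {n : ℕ}

/-- The point `(a, b • y)` of `ℂ × ℂⁿ = ℂⁿ⁺¹`, for real `y`. -/
noncomputable def consSmul (a b : ℂ) (y : EuclideanSpace ℝ (Fin n)) :
    EuclideanSpace ℂ (Fin (n + 1)) :=
  WithLp.toLp 2 (Fin.cons a fun i => b * y i)

theorem inner_consSmul (a b a' b' : ℂ) (y y' : EuclideanSpace ℝ (Fin n)) :
    ⟪consSmul a b y, consSmul a' b' y'⟫ =
      (starRingEnd ℂ) a * a' + (starRingEnd ℂ) b * b' * (inner ℝ y y' : ℝ) := by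
  simp only [consSmul, PiLp.inner_apply, Fin.sum_univ_succ, RCLike.inner_apply, Fin.cons_zero,
    Fin.cons_succ, map_mul, conj_ofReal, ofReal_sum, ofReal_mul, Finset.mul_sum, conj_trivial]
  rw [mul_comm a']
  congr 1
  exact Finset.sum_congr rfl fun i _ => by ring

theorem norm_consSmul_sq (a b : ℂ) (y : EuclideanSpace ℝ (Fin n)) :
    ‖consSmul a b y‖ ^ 2 = ‖a‖ ^ 2 + ‖b‖ ^ 2 * ‖y‖ ^ 2 := by
  have h := (inner_self_eq_norm_sq_to_K (𝕜 := ℂ) (consSmul a b y)).symm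
  rw [inner_consSmul, conj_mul', conj_mul', real_inner_self_eq_norm_sq] at h
  exact ofReal_injective (by push_cast at h ⊢; exact h)

theorem smul_consSmul (c a b : ℂ) (y : EuclideanSpace ℝ (Fin n)) :
    c • consSmul a b y = consSmul (c * a) (c * b) y := by
  ext i
  refine Fin.cases ?_ (fun j => ?_) i <;> simp [consSmul, mul_assoc]

theorem consSmul_eq_add (a b : ℂ) (y : EuclideanSpace ℝ (Fin n)) :
    consSmul a b y = a • consSmul 1 0 y + b • consSmul 0 1 y := by
  ext i
  refine Fin.cases ?_ (fun j => ?_) i <;> simp [consSmul]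

theorem hasDerivAt_consSmul {a b : ℝ → ℂ} {a' b' : ℂ} {x : ℝ} (ha : HasDerivAt a a' x)
    (hb : HasDerivAt b b' x) (y : EuclideanSpace ℝ (Fin n)) :
    HasDerivAt (fun t => consSmul (a t) (b t) y) (consSmul a' b' y) x := by
  have hfun : (fun t => consSmul (a t) (b t) y) =
      fun t => a t • consSmul 1 0 y + b t • consSmul 0 1 y :=
    funext fun t => consSmul_eq_add (a t) (b t) y
  rw [hfun, consSmul_eq_add a' b' y]
  exact (ha.smul_const (consSmul 1 0 y)).add (hb.smul_const (consSmul 0 1 y))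

theorem inner_consSmul_I_mul_neg_I_mul (a b : ℂ) (y : EuclideanSpace ℝ (Fin n)) :
    ⟪consSmul (I * a) (-I * b) y, I • consSmul a b y⟫ =
      ((‖a‖ ^ 2 - ‖b‖ ^ 2 * ‖y‖ ^ 2 : ℝ) : ℂ) := by
  rw [smul_consSmul, inner_consSmul, real_inner_self_eq_norm_sq]
  push_cast
  simp only [map_mul, map_neg, conj_I]
  linear_combination -I ^ 2 * conj_mul' a + I ^ 2 * ‖y‖ ^ 2 * conj_mul' b
    + (‖b‖ ^ 2 * ‖y‖ ^ 2 - ‖a‖ ^ 2 : ℂ) * I_sq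

theorem re_inner_consSmul_zero_I_smul (a b : ℂ) (y v : EuclideanSpace ℝ (Fin n)) :
    (⟪consSmul 0 b v, I • consSmul a b y⟫).re = 0 := by
  rw [smul_consSmul, inner_consSmul, map_zero, zero_mul, zero_add, mul_left_comm, conj_mul']
  simp [mul_re, ← ofReal_pow]

theorem equiv_symm_vecCons_eq_consSmul (a b : ℂ) (y : EuclideanSpace ℝ (Fin 3)) :
    (WithLp.equiv 2 (Fin 4 → ℂ)).symm ![a, b * (y 0 : ℂ), b * (y 1 : ℂ), b * (y 2 : ℂ)] =
      consSmul a b y := by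
  ext i
  fin_cases i <;> rfl

end EuclideanSpace

theorem hasDerivAt_cexp_const_mul_ofReal (w : ℂ) (x : ℝ) :
    HasDerivAt (fun t : ℝ => exp (w * t)) (w * exp (w * x)) x := by
  simpa [mul_comm] using ((hasDerivAt_id x).ofReal_comp.const_mul w).cexp

theorem norm_inv_sqrt_two_mul_exp_sq {w : ℂ} (hw : w.re = 0) :
    ‖((1 / Real.sqrt 2 : ℝ) : ℂ) * exp w‖ ^ 2 = 1 / 2 := by
  rw [norm_mul, norm_exp, hw, Real.exp_zero, mul_one, norm_real, Real.norm_eq_abs, sq_abs,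
    div_pow, Real.sq_sqrt zero_le_two, one_pow]

open EuclideanSpace in
/-- f(x,y) = (1/√2)(e^{ix}, e^{−ix}y) is a Legendrian immersion into S⁷ ⊂ ℂ⁴. -/
theorem stmt_17 (f : ℝ → EuclideanSpace ℝ (Fin 3) → EuclideanSpace ℂ (Fin 4))
    (hf : ∀ (x : ℝ) (y : EuclideanSpace ℝ (Fin 3)),
      f x y = (WithLp.equiv 2 (Fin 4 → ℂ)).symm
        ![((1/Real.sqrt 2 : ℝ) : ℂ) * Complex.exp (Complex.I * (x : ℂ)),
          ((1/Real.sqrt 2 : ℝ) : ℂ) * Complex.exp (-Complex.I * (x : ℂ)) * ((y 0 : ℝ) : ℂ),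
          ((1/Real.sqrt 2 : ℝ) : ℂ) * Complex.exp (-Complex.I * (x : ℂ)) * ((y 1 : ℝ) : ℂ),
          ((1/Real.sqrt 2 : ℝ) : ℂ) * Complex.exp (-Complex.I * (x : ℂ)) * ((y 2 : ℝ) : ℂ)]) :
    ∀ (x : ℝ) (y : EuclideanSpace ℝ (Fin 3)), ‖y‖ = 1 →
      ‖f x y‖ = 1 ∧
      (⟪deriv (fun t => f t y) x, Complex.I • f x y⟫).re = 0 ∧
      ∀ V : EuclideanSpace ℝ (Fin 3),
        (⟪((WithLp.equiv 2 (Fin 4 → ℂ)).symm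
            ![(0 : ℂ),
              ((1/Real.sqrt 2 : ℝ) : ℂ) * Complex.exp (-Complex.I * (x : ℂ)) * ((V 0 : ℝ) : ℂ),
              ((1/Real.sqrt 2 : ℝ) : ℂ) * Complex.exp (-Complex.I * (x : ℂ)) * ((V 1 : ℝ) : ℂ),
              ((1/Real.sqrt 2 : ℝ) : ℂ) * Complex.exp (-Complex.I * (x : ℂ)) * ((V 2 : ℝ) : ℂ)]),
          Complex.I • f x y⟫).re = 0 := by
  intro x y hy
  set c : ℂ := ((1 / Real.sqrt 2 : ℝ) : ℂ)
  have hfy (t : ℝ) : f t y = consSmul (c * exp (I * t)) (c * exp (-I * t)) y := by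
    rw [hf, equiv_symm_vecCons_eq_consSmul]
  have ha : ‖c * exp (I * x)‖ ^ 2 = 1 / 2 := norm_inv_sqrt_two_mul_exp_sq (by simp)
  have hb : ‖c * exp (-I * x)‖ ^ 2 = 1 / 2 := norm_inv_sqrt_two_mul_exp_sq (by simp)
  have hderiv : HasDerivAt (fun t => f t y)
      (consSmul (I * (c * exp (I * x))) (-I * (c * exp (-I * x))) y) x := by
    simp only [hfy]
    exact hasDerivAt_consSmul
      (((hasDerivAt_cexp_const_mul_ofReal I x).const_mul c).congr_deriv (by ring))
      (((hasDerivAt_cexp_const_mul_ofReal (-I) x).const_mul c).congr_deriv (by ring)) y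
  refine ⟨?_, ?_, fun V => ?_⟩
  · rw [← pow_eq_one_iff_of_nonneg (norm_nonneg _) two_ne_zero, hfy, norm_consSmul_sq, ha, hb, hy]
    norm_num
  · rw [hderiv.deriv, hfy, inner_consSmul_I_mul_neg_I_mul, ofReal_re, ha, hb, hy]
    norm_num
  · rw [equiv_symm_vecCons_eq_consSmul, hfy]
    exact re_inner_consSmul_zero_I_smul _ _ y V
end

section
/- Let λ < 0 and let a, c, d be real numbers with c < 0 < a, d ≥ 0, satisfying 1 + λ² + a·c − c² = 0. Set ρ₁ = (√(4c(2c−a)+d²)+d)/2 and ρ₂ = (√(4c(2c−a)+d²)−d)/2, and define y : ℝ² → ℂ³ by y(v,w) = ( √((λ²+1)/((c−a)(2c−a)))·e^{i(c−a)v}, √((λ²+1)/(ρ₁(ρ₁+ρ₂)))·e^{−i(cv+ρ₁w)}, √((λ²+1)/(ρ₂(ρ₁+ρ₂)))·e^{−i(cv−ρ₂w)} ). Then at every point ⟨∂y/∂v, ∂y/∂v⟩_ℝ = ⟨∂y/∂w, ∂y/∂w⟩_ℝ = λ² + 1 and ⟨∂y/∂v, ∂y/∂w⟩_ℝ = 0;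 in particular the induced metric on ℝ² is a constant multiple of the Euclidean metric, hence flat. -/
/-!
Each coordinate of `y` is a circle of constant radius `r k` traversed with a phase linear in
`(v, w)`, say `α k * v + β k * w`. Hence `∂y/∂v = (i α_k y_k)_k`, `∂y/∂w = (i β_k y_k)_k`, and
every real inner product of these derivatives is a constant `∑ r_k² p_k q_k`. The relation
`1 + λ² + ac - c² = 0` gives `c(2c - a) = c² + λ² + 1 > 0` and `(c - a)(2c - a) > 0`, so the radii
are honest square roots; since `ρ₁` and `-ρ₂` are the roots of `X² - dX - c(2c - a)`, the three
constants simplify to `λ² + 1`, `λ² + 1` and `0`.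
-/

open scoped ComplexInnerProductSpace
open Complex

section LinearTorusMap

variable {ι : Type*} (r α β : ι → ℝ)

noncomputable def linearTorusMap (v w : ℝ) : EuclideanSpace ℂ ι :=
  WithLp.toLp 2 fun k => (r k : ℂ) * exp (I * ((α k * v + β k * w : ℝ) : ℂ))

theorem linearTorusMap_swap (v w : ℝ) :
    linearTorusMap r α β v w = linearTorusMap r β α w v := by
  simp only [linearTorusMap, add_comm]

theorem norm_linearTorusMap_apply (v w : ℝ) (k : ι) :
    ‖linearTorusMap r α β v w k‖ = |r k| := by
  rw [linearTorusMap, PiLp.toLp_apply, norm_mul, mul_comm I, norm_exp_ofReal_mul_I, mul_one,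
    norm_real, Real.norm_eq_abs]

variable [Fintype ι]

theorem hasDerivAt_linearTorusMap_left (v w : ℝ) :
    HasDerivAt (fun t => linearTorusMap r α β t w)
      (WithLp.toLp 2 fun k => I * α k * linearTorusMap r α β v w k) v := by
  refine (PiLp.hasFDerivAt_toLp (𝕜 := ℝ) 2 _).comp_hasDerivAt v
    ((hasDerivAt_pi (φ := fun t k => (r k : ℂ) * exp (I * ((α k * t + β k * w : ℝ) : ℂ)))).2
      fun k => ?_)
  have hphase : HasDerivAt (fun t : ℝ => ((α k * t + β k * w : ℝ) : ℂ)) (α k : ℂ) v := by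
    simpa using (((hasDerivAt_id v).const_mul (α k)).add_const (β k * w)).ofReal_comp
  refine (((hphase.const_mul I).cexp).const_mul (r k : ℂ)).congr_deriv ?_
  simp only [linearTorusMap, PiLp.toLp_apply]
  ring

theorem hasDerivAt_linearTorusMap_right (v w : ℝ) :
    HasDerivAt (fun t => linearTorusMap r α β v t)
      (WithLp.toLp 2 fun k => I * β k * linearTorusMap r α β v w k) w := by
  simp only [linearTorusMap_swap r α β v]
  exact hasDerivAt_linearTorusMap_left r β α w v

theorem deriv_linearTorusMap_left (v w : ℝ) :
    deriv (fun t => linearTorusMap r α β t w) v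
      = WithLp.toLp 2 fun k => I * α k * linearTorusMap r α β v w k :=
  (hasDerivAt_linearTorusMap_left r α β v w).deriv

theorem deriv_linearTorusMap_right (v w : ℝ) :
    deriv (fun t => linearTorusMap r α β v t) w
      = WithLp.toLp 2 fun k => I * β k * linearTorusMap r α β v w k :=
  (hasDerivAt_linearTorusMap_right r α β v w).deriv

theorem inner_I_mul_toLp (p q : ι → ℝ) (x : EuclideanSpace ℂ ι) :
    ⟪(WithLp.toLp 2 fun k => I * p k * x k : EuclideanSpace ℂ ι),
      WithLp.toLp 2 fun k => I * q k * x k⟫ = ((∑ k, p k * q k * ‖x k‖ ^ 2 : ℝ) : ℂ) := by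
  simp only [PiLp.inner_apply, RCLike.inner_apply, ofReal_sum]
  refine Finset.sum_congr rfl fun k _ => ?_
  rw [map_mul, map_mul, conj_I, conj_ofReal, ofReal_mul, ofReal_mul, ofReal_pow, ← conj_mul']
  linear_combination -(p k * q k * starRingEnd ℂ (x k) * x k) * I_sq

theorem re_inner_I_mul_linearTorusMap (p q : ι → ℝ) (v w : ℝ) :
    (⟪(WithLp.toLp 2 fun k => I * p k * linearTorusMap r α β v w k : EuclideanSpace ℂ ι),
      WithLp.toLp 2 fun k => I * q k * linearTorusMap r α β v w k⟫).re
      = ∑ k, r k ^ 2 * p k * q k := by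
  simp only [inner_I_mul_toLp, ofReal_re, norm_linearTorusMap_apply, sq_abs]
  exact Finset.sum_congr rfl fun k _ => by ring

end LinearTorusMap

theorem pos_pos_mul_eq_of_half_sqrt {D d ρ₁ ρ₂ : ℝ} (hD : 0 < D)
    (hρ₁ : ρ₁ = (√(4 * D + d ^ 2) + d) / 2) (hρ₂ : ρ₂ = (√(4 * D + d ^ 2) - d) / 2) :
    0 < ρ₁ ∧ 0 < ρ₂ ∧ ρ₁ * ρ₂ = D := by
  have hs : √(4 * D + d ^ 2) ^ 2 = 4 * D + d ^ 2 := Real.sq_sqrt (by positivity)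
  have hd : |d| < √(4 * D + d ^ 2) :=
    (Real.lt_sqrt (abs_nonneg d)).2 (by rw [sq_abs]; linarith)
  obtain ⟨hd₁, hd₂⟩ := abs_lt.1 hd
  subst hρ₁ hρ₂
  exact ⟨by linarith, by linarith, by linear_combination hs / 4⟩

theorem flat_coefficients {k a c ρ₁ ρ₂ : ℝ} (hρ₁ : 0 < ρ₁) (hρ₂ : 0 < ρ₂)
    (hprod : ρ₁ * ρ₂ = c * (2 * c - a)) (hca : c - a ≠ 0) :
    k / ((c - a) * (2 * c - a)) * (c - a) ^ 2
        + (k / (ρ₁ * (ρ₁ + ρ₂)) + k / (ρ₂ * (ρ₁ + ρ₂))) * c ^ 2 = k ∧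
      k / (ρ₁ * (ρ₁ + ρ₂)) * ρ₁ ^ 2 + k / (ρ₂ * (ρ₁ + ρ₂)) * ρ₂ ^ 2 = k ∧
      k / (ρ₁ * (ρ₁ + ρ₂)) * ρ₁ = k / (ρ₂ * (ρ₁ + ρ₂)) * ρ₂ := by
  have hc : c * (2 * c - a) ≠ 0 := hprod ▸ (mul_pos hρ₁ hρ₂).ne'
  have h2ca : 2 * c - a ≠ 0 := right_ne_zero_of_mul hc
  refine ⟨?_, by field_simp, by field_simp⟩
  have hsum : k / (ρ₁ * (ρ₁ + ρ₂)) + k / (ρ₂ * (ρ₁ + ρ₂)) = k / (c * (2 * c - a)) := by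
    rw [← hprod]; field_simp; ring
  rw [hsum, div_mul_eq_mul_div, div_mul_eq_mul_div, div_add_div _ _ (mul_ne_zero hca h2ca) hc,
    div_eq_iff (mul_ne_zero (mul_ne_zero hca h2ca) hc)]
  ring

theorem stmt_18_general (lam a c d : ℝ)
    (hrel : 1 + lam^2 + a*c - c^2 = 0)
    (ρ₁ ρ₂ : ℝ)
    (hρ₁ : ρ₁ = (Real.sqrt (4*c*(2*c - a) + d^2) + d)/2)
    (hρ₂ : ρ₂ = (Real.sqrt (4*c*(2*c - a) + d^2) - d)/2)
    (y : ℝ → ℝ → EuclideanSpace ℂ (Fin 3))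
    (hy : ∀ v w : ℝ, y v w = (WithLp.equiv 2 (Fin 3 → ℂ)).symm
      ![((Real.sqrt ((lam^2 + 1)/((c - a)*(2*c - a))) : ℝ) : ℂ)
          * Complex.exp (Complex.I * (((c - a)*v : ℝ) : ℂ)),
        ((Real.sqrt ((lam^2 + 1)/(ρ₁*(ρ₁ + ρ₂))) : ℝ) : ℂ)
          * Complex.exp (-Complex.I * ((c*v + ρ₁*w : ℝ) : ℂ)),
        ((Real.sqrt ((lam^2 + 1)/(ρ₂*(ρ₁ + ρ₂))) : ℝ) : ℂ)
          * Complex.exp (-Complex.I * ((c*v - ρ₂*w : ℝ) : ℂ))]) :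
    ∀ v w : ℝ,
      (⟪deriv (fun t => y t w) v, deriv (fun t => y t w) v⟫).re = lam^2 + 1 ∧
      (⟪deriv (fun t => y v t) w, deriv (fun t => y v t) w⟫).re = lam^2 + 1 ∧
      (⟪deriv (fun t => y t w) v, deriv (fun t => y v t) w⟫).re = 0 := by
  have hy_torus : y = linearTorusMap
      ![√((lam^2 + 1)/((c - a)*(2*c - a))), √((lam^2 + 1)/(ρ₁*(ρ₁ + ρ₂))),
        √((lam^2 + 1)/(ρ₂*(ρ₁ + ρ₂)))] ![c - a, -c, -c] ![0, -ρ₁, ρ₂] := by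
    funext v w
    ext k
    rw [hy]
    simp only [linearTorusMap, WithLp.equiv_symm_apply, PiLp.toLp_apply]
    fin_cases k <;> simp only [Fin.zero_eta, Fin.mk_one, Fin.reduceFinMk, Matrix.cons_val] <;>
      congr 2 <;> push_cast <;> ring
  subst hy_torus
  intro v w
  simp only [deriv_linearTorusMap_left, deriv_linearTorusMap_right, re_inner_I_mul_linearTorusMap,
    Fin.sum_univ_three, Matrix.cons_val]
  have hk : 0 < lam ^ 2 + 1 := by positivity
  have hca : 0 < (c - a) * (2 * c - a) := by nlinarith [sq_nonneg (c - a)]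
  obtain ⟨hρ₁_pos, hρ₂_pos, hprod⟩ := pos_pos_mul_eq_of_half_sqrt (D := c * (2 * c - a))
    (d := d) (ρ₁ := ρ₁) (ρ₂ := ρ₂) (by nlinarith [sq_nonneg c])
    (by rw [hρ₁, mul_assoc]) (by rw [hρ₂, mul_assoc])
  have hsum := add_pos hρ₁_pos hρ₂_pos
  obtain ⟨hvv, hww, hvw⟩ := flat_coefficients (k := lam ^ 2 + 1) hρ₁_pos hρ₂_pos hprod
    (left_ne_zero_of_mul hca.ne')
  rw [Real.sq_sqrt (div_pos hk hca).le, Real.sq_sqrt (div_pos hk (mul_pos hρ₁_pos hsum)).le,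
    Real.sq_sqrt (div_pos hk (mul_pos hρ₂_pos hsum)).le]
  exact ⟨by linear_combination hvv, by linear_combination hww, by linear_combination c * hvw⟩

/-- the induced metric of the surface y(v,w) is (λ²+1) times
the Euclidean metric, hence flat. -/
theorem stmt_18 (lam a c d : ℝ) (hlam : lam < 0)
    (hc : c < 0) (ha : 0 < a) (hd : 0 ≤ d)
    (hrel : 1 + lam^2 + a*c - c^2 = 0)
    (ρ₁ ρ₂ : ℝ)
    (hρ₁ : ρ₁ = (Real.sqrt (4*c*(2*c - a) + d^2) + d)/2)
    (hρ₂ : ρ₂ = (Real.sqrt (4*c*(2*c - a) + d^2) - d)/2)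
    (y : ℝ → ℝ → EuclideanSpace ℂ (Fin 3))
    (hy : ∀ v w : ℝ, y v w = (WithLp.equiv 2 (Fin 3 → ℂ)).symm
      ![((Real.sqrt ((lam^2 + 1)/((c - a)*(2*c - a))) : ℝ) : ℂ)
          * Complex.exp (Complex.I * (((c - a)*v : ℝ) : ℂ)),
        ((Real.sqrt ((lam^2 + 1)/(ρ₁*(ρ₁ + ρ₂))) : ℝ) : ℂ)
          * Complex.exp (-Complex.I * ((c*v + ρ₁*w : ℝ) : ℂ)),
        ((Real.sqrt ((lam^2 + 1)/(ρ₂*(ρ₁ + ρ₂))) : ℝ) : ℂ)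
          * Complex.exp (-Complex.I * ((c*v - ρ₂*w : ℝ) : ℂ))]) :
    ∀ v w : ℝ,
      (⟪deriv (fun t => y t w) v, deriv (fun t => y t w) v⟫).re = lam^2 + 1 ∧
      (⟪deriv (fun t => y v t) w, deriv (fun t => y v t) w⟫).re = lam^2 + 1 ∧
      (⟪deriv (fun t => y t w) v, deriv (fun t => y v t) w⟫).re = 0 :=
  stmt_18_general lam a c d hrel ρ₁ ρ₂ hρ₁ hρ₂ y hy
end
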